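/- arXiv:1904.10425 — 6 statements merged into one kernel-verified Lean document; each statement's English description precedes it below -/
import Mathlib

section
/- For all integers k and n with 1 ≤ k ≤ n/2, every prime p, every vector a in F_p^n, and every α in [0,1], one has R_k(a) ≤ R_k^α(a) + (40·k^{1−α}·n^{1+α})^k. -/
/-!
A solution using fewer than `x = (1+α)k` distinct indices is a choice of `2k` signs together with
an index map `Fin (2k) → Fin n` whose image has at most `m < x` points, hence lies in one of the
`C(n, m)` sets of size `m`. This gives at most `4^k C(n, m) m^{2k}` such solutions, and
`C(n, m) ≤ n^m / m!`, `m^m / m! ≤ e^m`, `x ≤ n` bound this by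
`4^k e^x n^x x^{2k-x} = (4 e^{1+α} (1+α)^{1-α} k^{1-α} n^{1+α})^k`,
where `e^{1+α} (1+α)^{1-α} ≤ 5e²/4 < 10`.
-/

open scoped BigOperators

/-- `R_k(a)`: the number of choices of `2k` signs and `2k` indices (repetition allowed) with
`±a_{i₁} ± ⋯ ± a_{i_{2k}} = 0` in `F_p`. -/
noncomputable def Rk (p : ℕ) (k : ℕ) {ι : Type} (a : ι → ZMod p) : ℕ :=
  Set.ncard {z : (Fin (2 * k) → Bool) × (Fin (2 * k) → ι) |
    (∑ j, if z.1 j then a (z.2 j) else -a (z.2 j)) = 0}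

/-- `R_k^α(a)`: the number of choices of `2k` signs and `2k` indices with
`±a_{i₁} ± ⋯ ± a_{i_{2k}} = 0` in `F_p` that use at least `(1+α)k` distinct indices. -/
noncomputable def RkA (p : ℕ) (k : ℕ) (α : ℝ) {ι : Type} (a : ι → ZMod p) : ℕ :=
  Set.ncard {z : (Fin (2 * k) → Bool) × (Fin (2 * k) → ι) |
    ((∑ j, if z.1 j then a (z.2 j) else -a (z.2 j)) = 0) ∧
    (1 + α) * k ≤ ((Set.range z.2).ncard : ℝ)}

open Finset

theorem one_add_rpow_one_sub_le {α : ℝ} (h0 : 0 ≤ α) (h1 : α ≤ 1) :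
    (1 + α) ^ (1 - α) ≤ 5 / 4 :=
  calc (1 + α) ^ (1 - α) ≤ 1 + (1 - α) * α :=
        rpow_one_add_le_one_add_mul_self (by linarith) (by linarith) (by linarith)
    _ ≤ 5 / 4 := by nlinarith [sq_nonneg (α - 1 / 2)]

theorem pow_mul_pow_sub_le_rpow_mul_rpow_sub {x y : ℝ} {m N : ℕ} (hx : 0 < x) (hxy : x ≤ y)
    (hmx : m ≤ x) (hmN : m ≤ N) : y ^ m * x ^ (N - m) ≤ y ^ x * x ^ ((N : ℝ) - x) := by
  have hsplit : x ^ (N - m) = x ^ (x - m) * x ^ ((N : ℝ) - x) := by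
    rw [← Real.rpow_add hx, ← Real.rpow_natCast, Nat.cast_sub hmN]
    ring_nf
  have hy : y ^ x = y ^ m * y ^ (x - m) := by
    rw [← Real.rpow_natCast, ← Real.rpow_add (hx.trans_le hxy)]
    ring_nf
  have hy0 : 0 ≤ y := hx.le.trans hxy
  rw [hsplit, hy, ← mul_assoc]
  gcongr

section RangeCount

variable {α β : Type*} [Fintype α] [Fintype β]

theorem ncard_setOf_ncard_range_le {m : ℕ} (hm : m ≤ Fintype.card β) :
    {f : α → β | (Set.range f).ncard ≤ m}.ncard ≤
      (Fintype.card β).choose m * m ^ Fintype.card α := by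
  classical
  have hcover : {f : α → β | (Set.range f).ncard ≤ m} ⊆
      ↑((powersetCard m (univ : Finset β)).biUnion fun T => Fintype.piFinset fun _ : α => T) := by
    intro f hf
    have hf' : #(univ.image f) ≤ m := by
      rwa [← Set.ncard_coe_finset, coe_image, coe_univ, Set.image_univ]
    obtain ⟨T, hfT, -, hT⟩ := exists_subsuperset_card_eq (subset_univ _) hf' (by simpa using hm)
    simp only [coe_biUnion, mem_coe, mem_powersetCard, Set.mem_iUnion, Fintype.mem_piFinset]
    exact ⟨T, ⟨subset_univ T, hT⟩, fun a => hfT (mem_image_of_mem f (mem_univ a))⟩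
  calc _ ≤ #((powersetCard m univ).biUnion fun T => Fintype.piFinset fun _ : α => T) := by
        rw [← Set.ncard_coe_finset]; exact Set.ncard_le_ncard hcover
    _ ≤ ∑ T ∈ powersetCard m (univ : Finset β), #(Fintype.piFinset fun _ : α => T) :=
        card_biUnion_le
    _ = _ := by
        rw [sum_congr rfl fun T hT => by
          rw [Fintype.card_piFinset, prod_const, (mem_powersetCard.1 hT).2]]
        simp

theorem ncard_setOf_ncard_range_lt_le {x : ℝ} (hx : 0 < x) (hxα : x ≤ Fintype.card α)
    (hxβ : x ≤ Fintype.card β) :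
    ({f : α → β | ((Set.range f).ncard : ℝ) < x}.ncard : ℝ) ≤
      Real.exp x * (Fintype.card β : ℝ) ^ x * x ^ ((Fintype.card α : ℝ) - x) := by
  set N := Fintype.card α
  set n := Fintype.card β
  set m := ⌈x⌉₊ - 1
  have hmx : (m : ℝ) < x := by
    have := Nat.ceil_lt_add_one hx.le
    rw [Nat.cast_sub (Nat.one_le_ceil_iff.2 hx)]
    push_cast; linarith
  have hlt_iff (r : ℕ) : (r : ℝ) < x ↔ r ≤ m := by
    have := Nat.one_le_ceil_iff.2 hx
    rw [← Nat.lt_ceil]; omega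
  have hmN : m ≤ N := by exact_mod_cast (hmx.trans_le hxα).le
  have hmn : m ≤ n := by exact_mod_cast (hmx.trans_le hxβ).le
  calc ({f : α → β | ((Set.range f).ncard : ℝ) < x}.ncard : ℝ)
      ≤ n.choose m * m ^ N := by
        simp_rw [hlt_iff]; exact_mod_cast ncard_setOf_ncard_range_le hmn
    _ ≤ n ^ m / m.factorial * (m ^ m * m ^ (N - m)) := by
        rw [← pow_add, Nat.add_sub_cancel' hmN]
        gcongr
        exact Nat.choose_le_pow_div m n
    _ = (m ^ m / m.factorial) * (n ^ m * m ^ (N - m)) := by ring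
    _ ≤ Real.exp x * (n ^ m * x ^ (N - m)) := by
        gcongr
        exact (Real.pow_div_factorial_le_exp _ (Nat.cast_nonneg m) m).trans
          (Real.exp_le_exp.2 hmx.le)
    _ ≤ Real.exp x * ((n : ℝ) ^ x * x ^ ((N : ℝ) - x)) :=
        mul_le_mul_of_nonneg_left
          (pow_mul_pow_sub_le_rpow_mul_rpow_sub hx hxβ hmx.le hmN) (Real.exp_nonneg x)
    _ = _ := by ring

end RangeCount

theorem Rk_le_RkA_add_two_pow_mul_ncard {p k : ℕ} {ι : Type} [Finite ι] (α : ℝ)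
    (a : ι → ZMod p) :
    Rk p k a ≤ RkA p k α a +
      2 ^ (2 * k) * {f : Fin (2 * k) → ι | ((Set.range f).ncard : ℝ) < (1 + α) * k}.ncard := by
  have hcover : {z : (Fin (2 * k) → Bool) × (Fin (2 * k) → ι) |
      (∑ j, if z.1 j then a (z.2 j) else -a (z.2 j)) = 0} ⊆
      {z | ((∑ j, if z.1 j then a (z.2 j) else -a (z.2 j)) = 0) ∧
        (1 + α) * k ≤ ((Set.range z.2).ncard : ℝ)} ∪
      Set.univ ×ˢ {f | ((Set.range f).ncard : ℝ) < (1 + α) * k} := by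
    intro z hz
    by_cases h : (1 + α) * k ≤ ((Set.range z.2).ncard : ℝ)
    · exact Or.inl ⟨hz, h⟩
    · exact Or.inr ⟨trivial, not_le.1 h⟩
  calc Rk p k a ≤ _ := Set.ncard_le_ncard hcover (Set.toFinite _)
    _ ≤ _ := Set.ncard_union_le _ _
    _ = _ := by
        rw [Set.ncard_prod, Set.ncard_univ, Nat.card_fun]
        simp only [Nat.card_eq_fintype_card, Fintype.card_bool, Fintype.card_fin]
        rfl

theorem four_pow_mul_exp_mul_rpow_le {k : ℕ} {n α : ℝ} (hn : 0 ≤ n) (hα0 : 0 ≤ α)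
    (hα1 : α ≤ 1) :
    4 ^ k * (Real.exp ((1 + α) * k) * n ^ ((1 + α) * k) *
        ((1 + α) * k) ^ ((2 * k : ℕ) - (1 + α) * k)) ≤
      (40 * (k : ℝ) ^ (1 - α) * n ^ (1 + α)) ^ k := by
  have hsub : ((2 * k : ℕ) : ℝ) - (1 + α) * k = (1 - α) * k := by push_cast; ring
  have hexp : Real.exp ((1 + α) * k) = Real.exp (1 + α) ^ k := by
    rw [mul_comm, Real.exp_nat_mul]
  rw [hsub, hexp, Real.rpow_mul_natCast hn, Real.rpow_mul_natCast (by positivity),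
    Real.mul_rpow (by linarith) (Nat.cast_nonneg k), ← mul_pow, ← mul_pow, ← mul_pow]
  have he : Real.exp (1 + α) * (1 + α) ^ (1 - α) ≤ 10 := by
    have h2 : Real.exp (1 + α) ≤ Real.exp 1 ^ 2 := by
      rw [← Real.exp_nat_mul]; exact Real.exp_le_exp.2 (by push_cast; linarith)
    have h3 : Real.exp 1 ^ 2 < 7.4 := by nlinarith [Real.exp_one_lt_d9, Real.exp_pos 1]
    nlinarith [one_add_rpow_one_sub_le hα0 hα1, Real.exp_pos (1 + α),
      Real.rpow_nonneg (by linarith : (0 : ℝ) ≤ 1 + α) (1 - α)]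
  gcongr ?_ ^ k
  have : 0 ≤ (k : ℝ) ^ (1 - α) * n ^ (1 + α) := by positivity
  nlinarith

/-- For all integers `1 ≤ k ≤ n/2`, every prime `p`, every `a ∈ F_p^n` and every `α ∈ [0,1]`,
`R_k(a) ≤ R_k^α(a) + (40·k^{1−α}·n^{1+α})^k`. -/
theorem Rk_le_RkA_add :
    ∀ (k n : ℕ), 1 ≤ k → 2 * k ≤ n → ∀ (p : ℕ), p.Prime →
      ∀ (a : Fin n → ZMod p) (α : ℝ), 0 ≤ α → α ≤ 1 →
        (Rk p k a : ℝ) ≤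
          (RkA p k α a : ℝ) +
            (40 * (k : ℝ) ^ ((1 : ℝ) - α) * (n : ℝ) ^ ((1 : ℝ) + α)) ^ k := by
  intro k n hk hkn p _ a α hα0 hα1
  have hx : 0 < (1 + α) * k := by positivity
  have hx2k : (1 + α) * k ≤ ((2 * k : ℕ) : ℝ) := by push_cast; nlinarith
  have hxn : (1 + α) * k ≤ n := hx2k.trans (by exact_mod_cast hkn)
  have hsmall := ncard_setOf_ncard_range_lt_le (α := Fin (2 * k)) (β := Fin n) hx
    (by simpa using hx2k) (by simpa using hxn)
  simp only [Fintype.card_fin] at hsmall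
  have hcount : (Rk p k a : ℝ) ≤ RkA p k α a +
      4 ^ k * {f : Fin (2 * k) → Fin n | ((Set.range f).ncard : ℝ) < (1 + α) * k}.ncard := by
    have h4 : 2 ^ (2 * k) = 4 ^ k := by rw [pow_mul]; norm_num
    exact_mod_cast h4 ▸ Rk_le_RkA_add_two_pow_mul_ncard α a
  have hfinal := four_pow_mul_exp_mul_rpow_le (k := k) (Nat.cast_nonneg (n : ℕ)) hα0 hα1
  have hsmall4 := mul_le_mul_of_nonneg_left hsmall (by positivity : (0 : ℝ) ≤ 4 ^ k)
  linarith
end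

section
/- Let p be a prime, let k and n be positive integers, let s be in [n], let t be in [p], and let α be in (0,1). Define Bad_{k,s,≥t}^α(n) to be the set of all vectors a in F_p^n such that R_k^α(b) ≥ t·2^{2k}·|b|^{2k}/p for every subvector b of a with |b| ≥ s. Then |Bad_{k,s,≥t}^α(n)| ≤ (s/n)^{2k−1} · (αt)^{s−n} · p^n. -/
open scoped BigOperators

/-!
Double counting over the coordinate set `J`, by induction on `m = |J|`. Each of the at least
`T(m) = t·2^{2k}·m^{2k}/p` solutions of a bad vector uses `(1+α)k` distinct indices in `2k`
slots, hence has at least `2αk` indices occurring exactly once. Conversely, for a fixed index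
`i` and a fixed signed pattern in which `i` occurs once, the entry `a_i` of a solution is
determined by the rest of `a`, and `a` with `a_i` replaced by `0` is bad on `J \ {i}`. Thus
`|Bad(J)|·2αk·T(m) ≤ Σ_{i∈J} |Bad(J \ {i})|·2^{2k}·2k·(m-1)^{2k-1}`, which is exactly the
recursion satisfied by the claimed bound; at `m = s` the trivial bound `p^s` starts the
induction.
-/

open Finset

namespace Counting

section Occurrences

variable {κ ι R : Type*} [DecidableEq ι]

def occurrences [Fintype κ] (f : κ → ι) (i : ι) : ℕ := #{j | f j = i}

theorem two_mul_card_image_le [Fintype κ] (f : κ → ι) :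
    2 * #(univ.image f) ≤ Fintype.card κ + #{i ∈ univ.image f | occurrences f i = 1} := by
  have hfib : ∀ i ∈ univ.image f, 0 < occurrences f i := fun i hi => by
    obtain ⟨j, -, rfl⟩ := mem_image.1 hi
    exact card_pos.2 ⟨j, by simp⟩
  calc 2 * #(univ.image f) = ∑ i ∈ univ.image f, 2 := by rw [sum_const, smul_eq_mul, mul_comm]
    _ ≤ ∑ i ∈ univ.image f, (occurrences f i + if occurrences f i = 1 then 1 else 0) :=
        sum_le_sum fun i hi => by have := hfib i hi; split_ifs <;> omega
    _ = _ := by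
        rw [sum_add_distrib, sum_boole, Nat.cast_id, ← card_univ,
          card_eq_sum_card_image f univ]
        rfl

theorem card_filter_occurrences_eq_one_le [Fintype ι] {m : ℕ} (J : Finset ι) (i : ι) :
    #{f : Fin m → ι | (∀ j, f j ∈ J) ∧ occurrences f i = 1} ≤
      m * #(J.erase i) ^ (m - 1) := by
  calc _ ≤ #(univ.biUnion fun j₀ : Fin m =>
        Fintype.piFinset fun j => if j = j₀ then {i} else J.erase i) := by
        refine card_le_card fun f hf => ?_
        obtain ⟨hJ, hocc⟩ := (mem_filter.1 hf).2
        obtain ⟨j₀, hj₀⟩ := card_eq_one.1 hocc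
        have hfi : ∀ j, f j = i ↔ j = j₀ := fun j => by simpa using Finset.ext_iff.1 hj₀ j
        refine mem_biUnion.2 ⟨j₀, mem_univ _, Fintype.mem_piFinset.2 fun j => ?_⟩
        split_ifs with h
        · exact mem_singleton.2 ((hfi j).2 h)
        · exact mem_erase.2 ⟨fun h' => h ((hfi j).1 h'), hJ j⟩
    _ ≤ ∑ j₀ : Fin m, #(Fintype.piFinset fun j => if j = j₀ then {i} else J.erase i) :=
        card_biUnion_le
    _ = m * #(J.erase i) ^ (m - 1) := by
        simp [Fintype.card_piFinset, apply_ite card, prod_ite, filter_ne']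

abbrev SignedTuple (m : ℕ) (ι : Type*) := (Fin m → Bool) × (Fin m → ι)

def signedSum [AddCommGroup R] {m : ℕ} (a : ι → R) (z : SignedTuple m ι) : R :=
  ∑ j, if z.1 j then a (z.2 j) else -a (z.2 j)

theorem eq_of_signedSum_eq_zero [AddCommGroup R] {m : ℕ} {a b : ι → R} {i : ι}
    {z : SignedTuple m ι} (hz : occurrences z.2 i = 1)
    (hab : ∀ x ≠ i, a x = b x) (ha : signedSum a z = 0) (hb : signedSum b z = 0) : a = b := by
  obtain ⟨j₀, hj₀⟩ := card_eq_one.1 hz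
  have hzi : ∀ j, z.2 j = i ↔ j = j₀ := fun j => by simpa using Finset.ext_iff.1 hj₀ j
  have hdiff : signedSum a z - signedSum b z =
      if z.1 j₀ then a i - b i else -(a i - b i) := by
    rw [signedSum, signedSum, ← sum_sub_distrib, sum_eq_single j₀]
    · rw [(hzi j₀).2 rfl]; split_ifs <;> abel
    · intro j _ hj
      rw [hab _ (mt (hzi j).1 hj), sub_self]
    · simp
  rw [ha, hb, sub_self] at hdiff
  funext x
  by_cases hx : x = i
  · subst hx
    split_ifs at hdiff <;> simpa [sub_eq_zero, eq_comm] using hdiff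
  · exact hab x hx

noncomputable def solutions [Fintype ι] [AddCommGroup R] [DecidableEq R] (m : ℕ) (d : ℝ)
    (I : Finset ι) (a : ι → R) : Finset (SignedTuple m ι) :=
  {z | (∀ j, z.2 j ∈ I) ∧ signedSum a z = 0 ∧ d ≤ (Set.range z.2).ncard}

theorem solutions_congr [Fintype ι] [AddCommGroup R] [DecidableEq R] {m : ℕ} {d : ℝ}
    {I : Finset ι} {a b : ι → R} (hab : ∀ x ∈ I, a x = b x) :
    solutions m d I a = solutions m d I b := by
  refine filter_congr fun z _ => and_congr_right fun hz => ?_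
  rw [signedSum, signedSum, sum_congr rfl fun j _ => by rw [hab _ (hz j)]]

theorem two_mul_mul_le_card_filter_occurrences_eq_one [Fintype ι] [AddCommGroup R] [DecidableEq R]
    {k : ℕ} {α : ℝ} {J : Finset ι} {a : ι → R}
    {z : SignedTuple (2 * k) ι} (hz : z ∈ solutions (2 * k) ((1 + α) * k) J a) :
    2 * α * k ≤ #{i ∈ J | occurrences z.2 i = 1} := by
  obtain ⟨hJ, -, hdistinct⟩ := (mem_filter.1 hz).2
  have himage : (Set.range z.2).ncard = #(univ.image z.2) := by
    rw [← Set.ncard_coe_finset, coe_image, coe_univ, Set.image_univ]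
  have hsub :
      #{i ∈ univ.image z.2 | occurrences z.2 i = 1} ≤ #{i ∈ J | occurrences z.2 i = 1} :=
    card_le_card (filter_subset_filter _ (image_subset_iff.2 fun j _ => hJ j))
  have := two_mul_card_image_le z.2
  rw [Fintype.card_fin] at this
  rw [himage] at hdistinct
  have : (2 * #(univ.image z.2) : ℝ) ≤ 2 * k + #{i ∈ J | occurrences z.2 i = 1} := by
    exact_mod_cast this.trans (by omega)
  linarith

end Occurrences

theorem RkA_restrict_eq_card_solutions {ι : Type} [Fintype ι] [DecidableEq ι] {p k : ℕ}
    (α : ℝ) (I : Finset ι) (a : ι → ZMod p) :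
    RkA p k α (fun i : I => a i) = #(solutions (2 * k) ((1 + α) * k) I a) := by
  let e : SignedTuple (2 * k) I → SignedTuple (2 * k) ι :=
    fun z => (z.1, Subtype.val ∘ z.2)
  have he : e.Injective := fun z w h => Prod.ext (congrArg Prod.fst h :)
    (funext fun j => Subtype.val_injective (congrFun (congrArg Prod.snd h :) j))
  have hrange (g : Fin (2 * k) → I) :
      (Set.range (Subtype.val ∘ g)).ncard = (Set.range g).ncard := by
    rw [Set.range_comp, Set.ncard_image_of_injective _ Subtype.val_injective]
  rw [RkA, ← Set.ncard_image_of_injective _ he, ← Set.ncard_coe_finset]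
  congr 1
  ext w
  simp only [Set.mem_image, Set.mem_ofPred_eq, solutions, coe_filter, mem_univ, true_and]
  constructor
  · rintro ⟨z, ⟨hsum, hcard⟩, rfl⟩
    exact ⟨fun j => (z.2 j).2, hsum, by rwa [hrange]⟩
  · rintro ⟨hI, hsum, hcard⟩
    refine ⟨(w.1, fun j => ⟨w.2 j, hI j⟩), ⟨hsum, ?_⟩, rfl⟩
    rwa [← hrange]

section Bad

variable {ι : Type*} [Fintype ι] [DecidableEq ι] {p k s t : ℕ} {α : ℝ} [NeZero p]

/-- `Bad_{k,s,≥t}^α` on the coordinates `J`, realised as vectors vanishing off `J`. -/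
noncomputable def badSet (p k s t : ℕ) (α : ℝ) [NeZero p] (J : Finset ι) :
    Finset (ι → ZMod p) :=
  {a | (∀ j ∉ J, a j = 0) ∧ ∀ I ⊆ J, s ≤ #I →
    (t : ℝ) * 2 ^ (2 * k) * #I ^ (2 * k) / p ≤ #(solutions (2 * k) ((1 + α) * k) I a)}

theorem update_mem_badSet {J : Finset ι} {a : ι → ZMod p} (i : ι)
    (ha : a ∈ badSet p k s t α J) : Function.update a i 0 ∈ badSet p k s t α (J.erase i) := by
  obtain ⟨hsupp, hbad⟩ := (mem_filter.1 ha).2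
  refine mem_filter.2 ⟨mem_univ _, fun j hj => ?_, fun I hI hsI => ?_⟩
  · rcases eq_or_ne j i with rfl | hji
    · exact Function.update_self ..
    · rw [Function.update_of_ne hji]
      exact hsupp j fun hjJ => hj (mem_erase.2 ⟨hji, hjJ⟩)
  · rw [solutions_congr fun x hx => Function.update_of_ne (ne_of_mem_erase (hI hx)) _ _]
    exact hbad I (hI.trans (erase_subset i J)) hsI

theorem card_badSet_le_pow (J : Finset ι) : #(badSet p k s t α J) ≤ p ^ #J := by
  calc #(badSet p k s t α J) ≤ #(univ : Finset (J → ZMod p)) := by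
        refine card_le_card_of_injOn (fun a (j : J) => a j) (fun _ _ => mem_coe.2 (mem_univ _)) ?_
        intro a ha b hb hab
        funext x
        by_cases hx : x ∈ J
        · exact congrFun hab ⟨x, hx⟩
        · rw [(mem_filter.1 ha).2.1 x hx, (mem_filter.1 hb).2.1 x hx]
    _ = p ^ #J := by simp [ZMod.card]

theorem sum_card_filter_occurrences_eq_one_le {J : Finset ι} {i : ι} :
    ∑ a ∈ badSet p k s t α J,
        #{z ∈ solutions (2 * k) ((1 + α) * k) J a | occurrences z.2 i = 1} ≤
      #(badSet p k s t α (J.erase i)) * (2 ^ (2 * k) * (2 * k * #(J.erase i) ^ (2 * k - 1))) := by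
  set Z : Finset (SignedTuple (2 * k) ι) :=
    univ ×ˢ ({f | (∀ j, f j ∈ J) ∧ occurrences f i = 1} : Finset (Fin (2 * k) → ι))
  have hZ : #Z ≤ 2 ^ (2 * k) * (2 * k * #(J.erase i) ^ (2 * k - 1)) := by
    rw [card_product, card_univ, Fintype.card_fun, Fintype.card_bool, Fintype.card_fin]
    exact Nat.mul_le_mul_left _ (card_filter_occurrences_eq_one_le J i)
  calc ∑ a ∈ badSet p k s t α J,
          #{z ∈ solutions (2 * k) ((1 + α) * k) J a | occurrences z.2 i = 1}
      ≤ ∑ a ∈ badSet p k s t α J, #(Z.bipartiteAbove (fun a z => signedSum a z = 0) a) := by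
        refine sum_le_sum fun a _ => card_le_card fun z hz => ?_
        obtain ⟨hsol, hocc⟩ := mem_filter.1 hz
        obtain ⟨hJ, hsum, -⟩ := (mem_filter.1 hsol).2
        exact mem_filter.2
          ⟨mem_product.2 ⟨mem_univ _, mem_filter.2 ⟨mem_univ _, hJ, hocc⟩⟩, hsum⟩
    _ = ∑ z ∈ Z, #((badSet p k s t α J).bipartiteBelow (fun a z => signedSum a z = 0) z) :=
        sum_card_bipartiteAbove_eq_sum_card_bipartiteBelow _
    _ ≤ ∑ _z ∈ Z, #(badSet p k s t α (J.erase i)) := by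
        refine sum_le_sum fun z hz => ?_
        have hocc : occurrences z.2 i = 1 := (mem_filter.1 (mem_product.1 hz).2).2.2
        -- `a` is recovered from `update a i 0`, since `a i` occurs exactly once in the signed sum
        refine card_le_card_of_injOn (Function.update · i 0)
          (fun a ha => update_mem_badSet i (mem_filter.1 ha).1) fun a ha b hb hab => ?_
        refine eq_of_signedSum_eq_zero hocc (fun x hx => ?_) (mem_filter.1 ha).2 (mem_filter.1 hb).2
        simpa [Function.update_of_ne hx] using congrFun hab x
    _ = #Z * #(badSet p k s t α (J.erase i)) := by rw [sum_const, smul_eq_mul]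
    _ ≤ _ := by rw [mul_comm]; exact Nat.mul_le_mul_left _ hZ

theorem card_badSet_mul_le (hα : 0 ≤ α) {J : Finset ι} (hJ : s ≤ #J) :
    #(badSet p k s t α J) * (2 * α * k * ((t : ℝ) * 2 ^ (2 * k) * #J ^ (2 * k) / p)) ≤
      ∑ i ∈ J, (#(badSet p k s t α (J.erase i)) *
        (2 ^ (2 * k) * (2 * k * #(J.erase i) ^ (2 * k - 1))) : ℕ) := by
  have hlower : ∀ a ∈ badSet p k s t α J,
      2 * α * k * ((t : ℝ) * 2 ^ (2 * k) * #J ^ (2 * k) / p) ≤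
        ∑ z ∈ solutions (2 * k) ((1 + α) * k) J a,
          (#{i ∈ J | occurrences z.2 i = 1} : ℝ) := by
    intro a ha
    calc _ ≤ 2 * α * k * #(solutions (2 * k) ((1 + α) * k) J a) :=
          mul_le_mul_of_nonneg_left ((mem_filter.1 ha).2.2 J Subset.rfl hJ) (by positivity)
      _ = ∑ z ∈ solutions (2 * k) ((1 + α) * k) J a, 2 * α * k := by
          rw [sum_const, nsmul_eq_mul, mul_comm]
      _ ≤ _ := sum_le_sum fun z hz => two_mul_mul_le_card_filter_occurrences_eq_one hz
  have hswap : ∑ a ∈ badSet p k s t α J, ∑ z ∈ solutions (2 * k) ((1 + α) * k) J a,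
        #{i ∈ J | occurrences z.2 i = 1} =
      ∑ i ∈ J, ∑ a ∈ badSet p k s t α J,
        #{z ∈ solutions (2 * k) ((1 + α) * k) J a | occurrences z.2 i = 1} := by
    rw [sum_comm]
    exact sum_congr rfl fun a _ => sum_card_bipartiteAbove_eq_sum_card_bipartiteBelow _
  calc _ = ∑ _a ∈ badSet p k s t α J,
          2 * α * k * ((t : ℝ) * 2 ^ (2 * k) * #J ^ (2 * k) / p) := by
        rw [sum_const, nsmul_eq_mul]
    _ ≤ ∑ a ∈ badSet p k s t α J, ∑ z ∈ solutions (2 * k) ((1 + α) * k) J a,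
          (#{i ∈ J | occurrences z.2 i = 1} : ℝ) := sum_le_sum hlower
    _ ≤ _ := by
        exact_mod_cast hswap.trans_le (sum_le_sum fun i _ => sum_card_filter_occurrences_eq_one_le)

theorem bound_succ_mul_threshold {m : ℕ} (hm : m ≠ 0) (hk : k ≠ 0) (hαt : α * t ≠ 0) :
    ((s : ℝ) / (m + 1)) ^ (2 * k - 1) * (α * t) ^ ((s : ℝ) - (m + 1)) * (p : ℝ) ^ (m + 1) *
        (2 * α * k * ((t : ℝ) * 2 ^ (2 * k) * (m + 1) ^ (2 * k) / p)) =
      (m + 1) * (((s : ℝ) / m) ^ (2 * k - 1) * (α * t) ^ ((s : ℝ) - m) * (p : ℝ) ^ m *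
        (2 ^ (2 * k) * (2 * k * (m : ℝ) ^ (2 * k - 1)))) := by
  have hp : (p : ℝ) ≠ 0 := Nat.cast_ne_zero.2 (NeZero.ne p)
  have hrpow : (α * t) ^ ((s : ℝ) - m) = (α * t) ^ ((s : ℝ) - (m + 1)) * (α * t) := by
    rw [← Real.rpow_add_one hαt]; ring_nf
  obtain ⟨e, he⟩ : ∃ e, 2 * k = e + 1 := ⟨2 * k - 1, by omega⟩
  rw [hrpow, he, Nat.add_sub_cancel, div_pow, div_pow]
  have : (m : ℝ) ≠ 0 := Nat.cast_ne_zero.2 hm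
  field_simp
  ring

theorem card_badSet_le (hk : 0 < k) (hs : 0 < s) (ht : 0 < t) (hα : 0 < α) (J : Finset ι)
    (hJ : s ≤ #J) :
    (#(badSet p k s t α J) : ℝ) ≤
      ((s : ℝ) / #J) ^ (2 * k - 1) * (α * t) ^ ((s : ℝ) - #J) * (p : ℝ) ^ #J := by
  induction J using Finset.strongInduction with
  | H J ih =>
  rcases hJ.eq_or_lt with hsJ | hsJ
  · rw [← hsJ, div_self (by positivity), one_pow, sub_self, Real.rpow_zero, one_mul, one_mul]
    exact_mod_cast hsJ ▸ card_badSet_le_pow J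
  obtain ⟨m, hm⟩ : ∃ m, #J = m + 1 := ⟨#J - 1, by omega⟩
  have herase : ∀ i ∈ J, #(J.erase i) = m := fun i hi => by rw [card_erase_of_mem hi, hm]; rfl
  have hthreshold : 0 < 2 * α * k * ((t : ℝ) * 2 ^ (2 * k) * #J ^ (2 * k) / p) := by
    have := NeZero.pos p
    have : 0 < #J := by omega
    positivity
  refine le_of_mul_le_mul_right ?_ hthreshold
  calc _ ≤ _ := card_badSet_mul_le hα.le hJ
    _ ≤ ∑ i ∈ J, ((s : ℝ) / m) ^ (2 * k - 1) * (α * t) ^ ((s : ℝ) - m) * (p : ℝ) ^ m *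
          (2 ^ (2 * k) * (2 * k * (m : ℝ) ^ (2 * k - 1))) := by
        push_cast
        refine sum_le_sum fun i hi => ?_
        have := ih _ (erase_ssubset hi) (by rw [herase i hi]; omega)
        rw [herase i hi] at this ⊢
        gcongr
    _ = _ := by
        rw [sum_const, nsmul_eq_mul, hm, Nat.cast_add_one,
          bound_succ_mul_threshold (by omega) hk.ne' (by positivity)]

end Bad

end Counting

/-- The counting theorem: for a prime `p`, positive integers `k, n`, `s ∈ [n]`, `t ∈ [p]` and
`α ∈ (0,1)`, the number of vectors `a ∈ F_p^n` all of whose subvectors `b` of dimension at least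
`s` satisfy `R_k^α(b) ≥ t·2^{2k}·|b|^{2k}/p` is at most `(s/n)^{2k−1}·(αt)^{s−n}·p^n`. -/
theorem counting_theorem :
    ∀ (p : ℕ), p.Prime → ∀ (k n s t : ℕ) (α : ℝ),
      1 ≤ k → 1 ≤ n → 1 ≤ s → s ≤ n → 1 ≤ t → t ≤ p → 0 < α → α < 1 →
      (Set.ncard {a : Fin n → ZMod p |
          ∀ I : Finset (Fin n), s ≤ I.card →
            (t : ℝ) * 2 ^ (2 * k) * (I.card : ℝ) ^ (2 * k) / p ≤
              (RkA p k α (fun i : {x // x ∈ I} => a i.1) : ℝ)} : ℝ) ≤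
        ((s : ℝ) / n) ^ (2 * k - 1) * (α * t) ^ ((s : ℝ) - (n : ℝ)) * (p : ℝ) ^ n := by
  intro p hp k n s t α hk _ hs hsn ht _ hα _
  have : NeZero p := ⟨hp.ne_zero⟩
  have hbound := Counting.card_badSet_le (p := p) hk hs ht hα (univ : Finset (Fin n))
    (by simpa using hsn)
  rw [card_univ, Fintype.card_fin] at hbound
  convert hbound using 4
  rw [← Set.ncard_coe_finset]
  congr 1
  ext a
  simp [Counting.badSet, Counting.RkA_restrict_eq_card_solutions]
end

section
/- Fix r in (0,1] and let d = ⌈rn⌉. Let p be a prime with 2^{n^{0.1}}/2 ≤ p ≤ 2^{n^{0.1}}. There is a constant C = C(r) such that for every n and every fixed matrix M in M_{n,d}, if Ξ_n is an n×n random matrix with i.i.d. Rademacher (±1 with probability 1/2 each) entries, then the probability that there exists a nonzero vector v in F_p^n with |supp(v)| ≤ n^{0.8} such that (Ξ_n ∘ M)v = 0 over F_p is at most C·2^{−d/2}. -/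
set_option maxHeartbeats 1000000

open scoped BigOperators

/-- The size of the support of a vector over `F_p`. -/
noncomputable def suppCard (p : ℕ) {ι : Type} (a : ι → ZMod p) : ℕ :=
  Set.ncard {i | a i ≠ 0}

/-- `M ∈ M_{n,d}`: `M` is an `n × n` matrix with entries in `{0,1}` all of whose row sums and
column sums equal `d`. -/
def isRRD (n d : ℕ) (M : Matrix (Fin n) (Fin n) ℕ) : Prop :=
  (∀ i j, M i j = 0 ∨ M i j = 1) ∧ (∀ i, ∑ j, M i j = d) ∧ (∀ j, ∑ i, M i j = d)

open Real


lemma row_bound {n p : ℕ} [Fact p.Prime] (hp2 : (2 : ZMod p) ≠ 0)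
    (c : Fin n → ZMod p) (j₀ : Fin n) (hc : c j₀ ≠ 0) :
    (Finset.univ.filter (fun b : Fin n → Bool =>
        ∑ j, (if b j then c j else -c j) = 0)).card ≤ 2 ^ (n - 1) := by
  classical
  set S := Finset.univ.filter (fun b : Fin n → Bool =>
      ∑ j, (if b j then c j else -c j) = 0) with hS
  set σ : (Fin n → Bool) → (Fin n → Bool) := fun b => Function.update b j₀ (!b j₀) with hσ
  have hσσ : ∀ b, σ (σ b) = b := by
    intro b
    funext j
    by_cases h : j = j₀ <;> simp [hσ, Function.update, h]
  have hsum : ∀ b : Fin n → Bool,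
      ∑ j, (if σ b j then c j else -c j)
        = (if !b j₀ then c j₀ else -c j₀) - (if b j₀ then c j₀ else -c j₀)
          + ∑ j, (if b j then c j else -c j) := by
    intro b
    rw [← Finset.add_sum_erase _ (fun j => if σ b j then c j else -c j) (Finset.mem_univ j₀),
        ← Finset.add_sum_erase _ (fun j => if b j then c j else -c j) (Finset.mem_univ j₀)]
    have : ∀ j ∈ Finset.univ.erase j₀,
        (if σ b j then c j else -c j) = (if b j then c j else -c j) := by
      intro j hj
      have hj' : j ≠ j₀ := (Finset.mem_erase.1 hj).1
      simp [hσ, Function.update, hj']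
    rw [Finset.sum_congr rfl this]
    have : σ b j₀ = !b j₀ := by simp [hσ]
    rw [this]
    ring
  have hmap : ∀ b ∈ S, σ b ∈ Sᶜ := by
    intro b hb
    simp only [hS, Finset.mem_filter, Finset.mem_univ, true_and] at hb
    simp only [Finset.mem_compl, hS, Finset.mem_filter, Finset.mem_univ, true_and]
    rw [hsum b, hb, add_zero]
    have h2 : ∀ x : ZMod p, x ≠ 0 → ∀ y z : ZMod p, y - z = 0 → y = x → z = -x → False := by
      intro x hx y z hyz hy hz
      subst hy; subst hz
      exact mul_ne_zero hp2 hx (by linear_combination hyz)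
    cases hbj : b j₀
    · intro h
      exact h2 (c j₀) hc _ _ h (by simp [hbj]) (by simp [hbj])
    · intro h
      exact h2 (-c j₀) (neg_ne_zero.2 hc) _ _ h (by simp [hbj]) (by simp [hbj])
  have hinj : Set.InjOn σ S := by
    intro a _ b _ hab
    have := congrArg σ hab
    rwa [hσσ, hσσ] at this
  have h1 : S.card ≤ Sᶜ.card := Finset.card_le_card_of_injOn σ hmap hinj
  have h2 : S.card + Sᶜ.card = 2 ^ n := by
    rw [Finset.card_add_card_compl]
    simp [Fintype.card_fun]
  have hn : 1 ≤ n := j₀.pos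
  have h3 : 2 ^ n = 2 * 2 ^ (n - 1) := by
    rw [← pow_succ']
    congr 1
    omega
  omega

lemma matrix_count {n p d : ℕ} [Fact p.Prime] (hp2 : (2 : ZMod p) ≠ 0)
    (M : Matrix (Fin n) (Fin n) ℕ) (hM : isRRD n d M)
    (v : Fin n → ZMod p) (j₀ : Fin n) (hv : v j₀ ≠ 0) :
    (Finset.univ.filter (fun ξ : Fin n → Fin n → Bool =>
        ∀ i, (∑ j, (if ξ i j then (M i j : ZMod p) else -(M i j : ZMod p)) * v j) = 0)).card
      ≤ 2 ^ (n * n - d) := by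
  classical
  set A : Fin n → Finset (Fin n → Bool) := fun i =>
    Finset.univ.filter (fun b : Fin n → Bool =>
      ∑ j, (if b j then ((M i j : ZMod p) * v j) else -((M i j : ZMod p) * v j)) = 0) with hA
  have hfilter : (Finset.univ.filter (fun ξ : Fin n → Fin n → Bool =>
      ∀ i, (∑ j, (if ξ i j then (M i j : ZMod p) else -(M i j : ZMod p)) * v j) = 0))
      = Fintype.piFinset A := by
    ext ξ
    simp only [Finset.mem_filter, Finset.mem_univ, true_and, Fintype.mem_piFinset, hA]
    apply forall_congr'
    intro i
    have : ∀ j, (if ξ i j then (M i j : ZMod p) else -(M i j : ZMod p)) * v j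
        = (if ξ i j then ((M i j : ZMod p) * v j) else -((M i j : ZMod p) * v j)) := by
      intro j; split <;> ring
    rw [show (∑ j, (if ξ i j then (M i j : ZMod p) else -(M i j : ZMod p)) * v j)
        = ∑ j, (if ξ i j then ((M i j : ZMod p) * v j) else -((M i j : ZMod p) * v j)) from
      Finset.sum_congr rfl (fun j _ => this j)]
  rw [hfilter, Fintype.card_piFinset]
  -- the good rows
  set G : Finset (Fin n) := Finset.univ.filter (fun i => M i j₀ = 1) with hG
  have hGcard : G.card = d := by
    rw [hG, Finset.card_filter, ← hM.2.2 j₀]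
    refine Finset.sum_congr rfl (fun i _ => ?_)
    rcases hM.1 i j₀ with h | h <;> simp [h]
  have hgood : ∀ i ∈ G, (A i).card ≤ 2 ^ (n - 1) := by
    intro i hi
    have hij : M i j₀ = 1 := by simpa [hG] using hi
    exact row_bound hp2 (fun j => (M i j : ZMod p) * v j) j₀ (by simp [hij, hv])
  have hall : ∀ i, (A i).card ≤ 2 ^ n := by
    intro i
    calc (A i).card ≤ Fintype.card (Fin n → Bool) := Finset.card_filter_le _ _ |>.trans
          (by simp)
    _ = 2 ^ n := by simp
  have hprod : ∏ i, (A i).card ≤ (2 ^ (n - 1)) ^ d * (2 ^ n) ^ (n - d) := by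
    calc ∏ i, (A i).card ≤ ∏ i, (if i ∈ G then 2 ^ (n - 1) else 2 ^ n) := by
          refine Finset.prod_le_prod (fun _ _ => Nat.zero_le _) (fun i _ => ?_)
          split
          · exact hgood i (by assumption)
          · exact hall i
    _ = (∏ _x ∈ Finset.univ.filter (· ∈ G), 2 ^ (n - 1)) *
          ∏ _x ∈ Finset.univ.filter (· ∉ G), 2 ^ n := by
          rw [← Finset.prod_filter_mul_prod_filter_not Finset.univ (fun i => i ∈ G)]
          congr 1
          · exact Finset.prod_congr rfl (fun x hx => if_pos (Finset.mem_filter.1 hx).2)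
          · exact Finset.prod_congr rfl (fun x hx => if_neg (Finset.mem_filter.1 hx).2)
    _ = (2 ^ (n - 1)) ^ d * (2 ^ n) ^ (n - d) := by
          rw [Finset.prod_const, Finset.prod_const]
          have h1 : Finset.univ.filter (· ∈ G) = G := by ext x; simp
          have h2 : (Finset.univ.filter (· ∉ G)).card = n - d := by
            rw [show Finset.univ.filter (· ∉ G) = Gᶜ from by ext x; simp [Finset.mem_compl],
              Finset.card_compl, hGcard]
            simp
          rw [h1, hGcard, h2]
  refine hprod.trans (le_of_eq ?_)
  have hn1 : 1 ≤ n := j₀.pos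
  have hdn : d ≤ n := by
    rw [← hM.2.1 j₀]
    calc ∑ j, M j₀ j ≤ ∑ _j : Fin n, 1 :=
          Finset.sum_le_sum (fun j _ => by rcases hM.1 j₀ j with h | h <;> simp [h])
    _ = n := by simp
  rw [← pow_mul, ← pow_mul, ← pow_add]
  congr 1
  have hdn2 : d ≤ n * n := hdn.trans (Nat.le_mul_of_pos_left n hn1)
  zify [hn1, hdn, hdn2]
  ring



lemma count_small_support (n p s : ℕ) [NeZero p] :
    (Finset.univ.filter (fun v : Fin n → ZMod p =>
        (Finset.univ.filter (fun j => v j ≠ 0)).card ≤ s)).card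
      ≤ (s + 1) * (n + 1) ^ s * p ^ s := by
  classical
  -- family of supports
  set 𝒯 : Finset (Finset (Fin n)) := Finset.univ.filter (fun T => T.card ≤ s) with h𝒯
  have hsub : (Finset.univ.filter (fun v : Fin n → ZMod p =>
      (Finset.univ.filter (fun j => v j ≠ 0)).card ≤ s))
      ⊆ 𝒯.biUnion (fun T => Finset.univ.filter (fun v : Fin n → ZMod p =>
          ∀ j, j ∉ T → v j = 0)) := by
    intro v hv
    simp only [Finset.mem_filter, Finset.mem_univ, true_and] at hv
    refine Finset.mem_biUnion.2 ⟨Finset.univ.filter (fun j => v j ≠ 0), ?_, ?_⟩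
    · simp only [h𝒯, Finset.mem_filter, Finset.mem_univ, true_and]
      exact hv
    · simp only [Finset.mem_filter, Finset.mem_univ, true_and, not_not]
      exact fun j hj => hj
  have hinner : ∀ T ∈ 𝒯, (Finset.univ.filter (fun v : Fin n → ZMod p =>
      ∀ j, j ∉ T → v j = 0)).card ≤ p ^ s := by
    intro T hT
    have hTs : T.card ≤ s := by simpa [h𝒯] using hT
    have heq : (Finset.univ.filter (fun v : Fin n → ZMod p => ∀ j, j ∉ T → v j = 0))
        = Fintype.piFinset (fun j => if j ∈ T then Finset.univ else {(0 : ZMod p)}) := by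
      ext v
      simp only [Finset.mem_filter, Finset.mem_univ, true_and, Fintype.mem_piFinset]
      constructor
      · intro h j
        by_cases hj : j ∈ T <;> simp [hj, h j]
      · intro h j hj
        have := h j
        simpa [hj] using this
    rw [heq, Fintype.card_piFinset]
    calc ∏ j, (if j ∈ T then (Finset.univ : Finset (ZMod p)) else {0}).card
        = ∏ j, (if j ∈ T then p else 1) := by
          refine Finset.prod_congr rfl (fun j _ => ?_)
          split <;> simp [ZMod.card]
      _ = p ^ T.card := by
          rw [Finset.prod_ite_mem, Finset.univ_inter, Finset.prod_const]
      _ ≤ p ^ s := Nat.pow_le_pow_right (NeZero.pos p) hTs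
  have h𝒯card : 𝒯.card ≤ (s + 1) * (n + 1) ^ s := by
    have : 𝒯 = (Finset.range (s + 1)).biUnion
        (fun k => Finset.powersetCard k (Finset.univ : Finset (Fin n))) := by
      ext T
      simp only [h𝒯, Finset.mem_filter, Finset.mem_univ, true_and, Finset.mem_biUnion,
        Finset.mem_range, Finset.mem_powersetCard]
      constructor
      · intro h
        exact ⟨T.card, by omega, Finset.subset_univ T, rfl⟩
      · rintro ⟨k, hk, -, rfl⟩
        omega
    rw [this]
    calc ((Finset.range (s + 1)).biUnion
          (fun k => Finset.powersetCard k (Finset.univ : Finset (Fin n)))).card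
        ≤ ∑ k ∈ Finset.range (s + 1), (Finset.powersetCard k (Finset.univ : Finset (Fin n))).card :=
          Finset.card_biUnion_le
      _ ≤ ∑ _k ∈ Finset.range (s + 1), (n + 1) ^ s := by
          refine Finset.sum_le_sum (fun k hk => ?_)
          rw [Finset.card_powersetCard]
          have h1 : (Finset.univ : Finset (Fin n)).card.choose k ≤ n ^ k := by
            simpa using Nat.choose_le_pow n k
          calc (Finset.univ : Finset (Fin n)).card.choose k ≤ n ^ k := h1
            _ ≤ (n + 1) ^ k := Nat.pow_le_pow_left (by omega) k
            _ ≤ (n + 1) ^ s := Nat.pow_le_pow_right (by omega) (by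
                have := Finset.mem_range.1 hk; omega)
      _ = (s + 1) * (n + 1) ^ s := by simp [Finset.sum_const, mul_comm]
  calc (Finset.univ.filter (fun v : Fin n → ZMod p =>
        (Finset.univ.filter (fun j => v j ≠ 0)).card ≤ s)).card
      ≤ ∑ T ∈ 𝒯, (Finset.univ.filter (fun v : Fin n → ZMod p =>
          ∀ j, j ∉ T → v j = 0)).card :=
        (Finset.card_le_card hsub).trans Finset.card_biUnion_le
    _ ≤ ∑ _T ∈ 𝒯, p ^ s := Finset.sum_le_sum hinner
    _ = 𝒯.card * p ^ s := by simp [Finset.sum_const]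
    _ ≤ ((s + 1) * (n + 1) ^ s) * p ^ s := Nat.mul_le_mul_right _ h𝒯card

lemma main_count {n p d : ℕ} [Fact p.Prime] (hp2 : (2 : ZMod p) ≠ 0)
    (M : Matrix (Fin n) (Fin n) ℕ) (hM : isRRD n d M) :
    Set.ncard {ξ : Fin n → Fin n → Bool |
        ∃ v : Fin n → ZMod p, v ≠ 0 ∧ (suppCard p v : ℝ) ≤ (n : ℝ) ^ (0.8 : ℝ) ∧
          ∀ i, (∑ j, (if ξ i j then (M i j : ZMod p) else -(M i j : ZMod p)) * v j) = 0}
      ≤ ((⌊(n : ℝ) ^ (0.8 : ℝ)⌋₊ + 1) * (n + 1) ^ ⌊(n : ℝ) ^ (0.8 : ℝ)⌋₊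
          * p ^ ⌊(n : ℝ) ^ (0.8 : ℝ)⌋₊) * 2 ^ (n * n - d) := by
  classical
  set s := ⌊(n : ℝ) ^ (0.8 : ℝ)⌋₊ with hs
  set Vf : Finset (Fin n → ZMod p) := Finset.univ.filter (fun v =>
      v ≠ 0 ∧ (Finset.univ.filter (fun j => v j ≠ 0)).card ≤ s) with hVf
  set BIG : Finset (Fin n → Fin n → Bool) := Vf.biUnion (fun v =>
      Finset.univ.filter (fun ξ : Fin n → Fin n → Bool =>
        ∀ i, (∑ j, (if ξ i j then (M i j : ZMod p) else -(M i j : ZMod p)) * v j) = 0)) with hBIG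
  have hsupp : ∀ v : Fin n → ZMod p,
      suppCard p v = (Finset.univ.filter (fun j => v j ≠ 0)).card := by
    intro v
    rw [suppCard, ← Set.ncard_coe_finset]
    congr 1
    ext j
    simp
  have hsub : {ξ : Fin n → Fin n → Bool |
      ∃ v : Fin n → ZMod p, v ≠ 0 ∧ (suppCard p v : ℝ) ≤ (n : ℝ) ^ (0.8 : ℝ) ∧
        ∀ i, (∑ j, (if ξ i j then (M i j : ZMod p) else -(M i j : ZMod p)) * v j) = 0}
      ⊆ ↑BIG := by
    rintro ξ ⟨v, hv0, hvs, hrow⟩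
    simp only [hBIG, Finset.coe_biUnion, Set.mem_iUnion, Finset.mem_coe]
    refine ⟨v, ?_, ?_⟩
    · simp only [hVf, Finset.mem_filter, Finset.mem_univ, true_and]
      refine ⟨hv0, ?_⟩
      rw [← hsupp v]
      exact Nat.le_floor hvs
    · simp only [Finset.mem_filter, Finset.mem_univ, true_and]
      exact hrow
  calc Set.ncard {ξ : Fin n → Fin n → Bool |
        ∃ v : Fin n → ZMod p, v ≠ 0 ∧ (suppCard p v : ℝ) ≤ (n : ℝ) ^ (0.8 : ℝ) ∧
          ∀ i, (∑ j, (if ξ i j then (M i j : ZMod p) else -(M i j : ZMod p)) * v j) = 0}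
      ≤ Set.ncard (↑BIG : Set (Fin n → Fin n → Bool)) :=
        Set.ncard_le_ncard hsub (Finset.finite_toSet _)
    _ = BIG.card := Set.ncard_coe_finset _
    _ ≤ ∑ v ∈ Vf, (Finset.univ.filter (fun ξ : Fin n → Fin n → Bool =>
          ∀ i, (∑ j, (if ξ i j then (M i j : ZMod p) else -(M i j : ZMod p)) * v j) = 0)).card :=
        Finset.card_biUnion_le
    _ ≤ ∑ _v ∈ Vf, 2 ^ (n * n - d) := by
        refine Finset.sum_le_sum (fun v hv => ?_)
        have hv0 : v ≠ 0 := by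
          simp only [hVf, Finset.mem_filter, Finset.mem_univ, true_and] at hv
          exact hv.1
        obtain ⟨j₀, hj₀⟩ := Function.ne_iff.1 hv0
        exact matrix_count hp2 M hM v j₀ (by simpa using hj₀)
    _ = Vf.card * 2 ^ (n * n - d) := by simp [Finset.sum_const]
    _ ≤ ((s + 1) * (n + 1) ^ s * p ^ s) * 2 ^ (n * n - d) := by
        have hVsub : Vf ⊆ Finset.univ.filter (fun v : Fin n → ZMod p =>
            (Finset.univ.filter (fun j => v j ≠ 0)).card ≤ s) := by
          intro v hv
          simp only [hVf, Finset.mem_filter, Finset.mem_univ, true_and] at hv ⊢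
          exact hv.2
        have : Vf.card ≤ (s + 1) * (n + 1) ^ s * p ^ s :=
          (Finset.card_le_card hVsub).trans (count_small_support n p s)
        exact Nat.mul_le_mul_right _ this

lemma analytic_bound (r : ℝ) (hr : 0 < r) (n p : ℕ)
    (hn1 : (2 : ℝ) ^ (20 : ℕ) ≤ (n : ℝ)) (hn2 : (144 / r) ^ (10 : ℝ) ≤ (n : ℝ))
    (hphigh : (p : ℝ) ≤ (2 : ℝ) ^ ((n : ℝ) ^ (0.1 : ℝ))) :
    (((⌊(n : ℝ) ^ (0.8 : ℝ)⌋₊ + 1) * (n + 1) ^ ⌊(n : ℝ) ^ (0.8 : ℝ)⌋₊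
        * p ^ ⌊(n : ℝ) ^ (0.8 : ℝ)⌋₊ : ℕ) : ℝ)
      ≤ (2 : ℝ) ^ (((⌈r * (n : ℝ)⌉₊ : ℕ) : ℝ) / 2) := by
  set x : ℝ := (n : ℝ) with hx
  have hx1 : (1 : ℝ) ≤ x := le_trans (by norm_num) hn1
  have hx0 : (0 : ℝ) < x := lt_of_lt_of_le one_pos hx1
  set s : ℕ := ⌊x ^ (0.8 : ℝ)⌋₊ with hs
  have hsle : (s : ℝ) ≤ x ^ (0.8 : ℝ) := Nat.floor_le (rpow_nonneg hx0.le _)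
  have hx08_1 : (1 : ℝ) ≤ x ^ (0.8 : ℝ) := one_le_rpow hx1 (by norm_num)
  have hx08_le_x : x ^ (0.8 : ℝ) ≤ x := by
    calc x ^ (0.8 : ℝ) ≤ x ^ (1 : ℝ) := rpow_le_rpow_of_exponent_le hx1 (by norm_num)
    _ = x := rpow_one x
  -- bound the left side by rpow expressions
  have hstep1 : (((s + 1) * (n + 1) ^ s * p ^ s : ℕ) : ℝ)
      ≤ (x + 1) ^ (x ^ (0.8 : ℝ) + 1) * (2 : ℝ) ^ (x ^ (0.9 : ℝ)) := by
    push_cast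
    have hb1 : ((s : ℝ) + 1) ≤ (x + 1) ^ (1 : ℝ) := by
      rw [rpow_one]
      have : (s : ℝ) ≤ x := hsle.trans hx08_le_x
      linarith
    have hb2 : ((x + 1)) ^ s ≤ (x + 1) ^ (x ^ (0.8 : ℝ)) := by
      rw [← rpow_natCast (x + 1) s]
      exact rpow_le_rpow_of_exponent_le (by linarith) (hsle.trans (le_refl _))
    have hb3 : ((p : ℝ)) ^ s ≤ (2 : ℝ) ^ (x ^ (0.9 : ℝ)) := by
      calc ((p : ℝ)) ^ s ≤ ((2 : ℝ) ^ (x ^ (0.1 : ℝ))) ^ s :=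
            pow_le_pow_left₀ (Nat.cast_nonneg p) hphigh s
      _ = (2 : ℝ) ^ (x ^ (0.1 : ℝ) * s) := by
            rw [← rpow_natCast ((2 : ℝ) ^ (x ^ (0.1 : ℝ))) s, ← rpow_mul (by norm_num)]
      _ ≤ (2 : ℝ) ^ (x ^ (0.9 : ℝ)) := by
            apply rpow_le_rpow_of_exponent_le (by norm_num)
            calc x ^ (0.1 : ℝ) * s ≤ x ^ (0.1 : ℝ) * x ^ (0.8 : ℝ) := by
                  apply mul_le_mul_of_nonneg_left hsle (rpow_nonneg hx0.le _)
            _ = x ^ (0.9 : ℝ) := by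
                  rw [← rpow_add hx0]; norm_num
    have h1 : (x + 1) ^ (x ^ (0.8 : ℝ) + 1) = (x + 1) ^ (x ^ (0.8 : ℝ)) * (x + 1) ^ (1 : ℝ) := by
      rw [← rpow_add (by linarith)]
    rw [h1]
    have hnn1 : (0 : ℝ) ≤ (s : ℝ) + 1 := by positivity
    have hnn2 : (0 : ℝ) ≤ ((x + 1)) ^ s := by positivity
    have hnn3 : (0 : ℝ) ≤ ((p : ℝ)) ^ s := by positivity
    calc ((s : ℝ) + 1) * (x + 1) ^ s * (p : ℝ) ^ s
        ≤ ((x + 1) ^ (1 : ℝ)) * ((x + 1) ^ (x ^ (0.8 : ℝ))) * ((2 : ℝ) ^ (x ^ (0.9 : ℝ))) := by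
          apply mul_le_mul (mul_le_mul hb1 hb2 hnn2 (by positivity)) hb3 hnn3 (by positivity)
    _ = (x + 1) ^ (x ^ (0.8 : ℝ)) * (x + 1) ^ (1 : ℝ) * (2 : ℝ) ^ (x ^ (0.9 : ℝ)) := by ring
  -- key exponent inequality
  have hlog : (x ^ (0.8 : ℝ) + 1) * Real.log (x + 1)
      ≤ (r * x / 2 - x ^ (0.9 : ℝ)) * Real.log 2 := by
    have hlogx : Real.log x ≤ 20 * x ^ (0.05 : ℝ) := by
      have h1 : Real.log (x ^ (0.05 : ℝ)) = 0.05 * Real.log x := log_rpow hx0 _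
      have h2 : Real.log (x ^ (0.05 : ℝ)) ≤ x ^ (0.05 : ℝ) - 1 :=
        log_le_sub_one_of_pos (rpow_pos_of_pos hx0 _)
      nlinarith [rpow_nonneg hx0.le (0.05 : ℝ)]
    have hx005_1 : (1 : ℝ) ≤ x ^ (0.05 : ℝ) := one_le_rpow hx1 (by norm_num)
    have hlogx1 : Real.log (x + 1) ≤ 21 * x ^ (0.05 : ℝ) := by
      have h1 : Real.log (x + 1) ≤ Real.log (2 * x) :=
        Real.log_le_log (by linarith) (by linarith)
      rw [Real.log_mul (by norm_num) (ne_of_gt hx0)] at h1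
      have h2 : Real.log 2 ≤ 1 := by
        have := log_le_sub_one_of_pos (by norm_num : (0:ℝ) < 2); linarith
      linarith
    have hLHS : (x ^ (0.8 : ℝ) + 1) * Real.log (x + 1) ≤ 42 * x ^ (0.9 : ℝ) := by
      have h1 : x ^ (0.8 : ℝ) + 1 ≤ 2 * x ^ (0.8 : ℝ) := by linarith
      have h2 : (x ^ (0.8 : ℝ) + 1) * Real.log (x + 1)
          ≤ (2 * x ^ (0.8 : ℝ)) * (21 * x ^ (0.05 : ℝ)) := by
        apply mul_le_mul h1 hlogx1 (Real.log_nonneg (by linarith)) (by positivity)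
      have h3 : (2 * x ^ (0.8 : ℝ)) * (21 * x ^ (0.05 : ℝ)) = 42 * x ^ (0.85 : ℝ) := by
        rw [show (0.85 : ℝ) = 0.8 + 0.05 by norm_num, rpow_add hx0]; ring
      have h4 : x ^ (0.85 : ℝ) ≤ x ^ (0.9 : ℝ) :=
        rpow_le_rpow_of_exponent_le hx1 (by norm_num)
      linarith
    -- lower bound on the right side
    have hy : 144 / r ≤ x ^ (0.1 : ℝ) := by
      have ha : (0 : ℝ) < 144 / r := by positivity
      calc 144 / r = ((144 / r) ^ (10 : ℝ)) ^ (0.1 : ℝ) := by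
            rw [← rpow_mul ha.le]; norm_num
      _ ≤ x ^ (0.1 : ℝ) := rpow_le_rpow (rpow_nonneg ha.le _) hn2 (by norm_num)
    have hxsplit : x ^ (0.9 : ℝ) * x ^ (0.1 : ℝ) = x := by
      rw [← rpow_add hx0]; norm_num
    have hx09pos : (0 : ℝ) < x ^ (0.9 : ℝ) := rpow_pos_of_pos hx0 _
    have hrx : 72 * x ^ (0.9 : ℝ) ≤ r * x / 2 := by
      have : r * (144 / r) ≤ r * x ^ (0.1 : ℝ) := mul_le_mul_of_nonneg_left hy hr.le
      rw [mul_div_cancel₀ _ (ne_of_gt hr)] at this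
      calc 72 * x ^ (0.9 : ℝ) = x ^ (0.9 : ℝ) * 144 / 2 := by ring
      _ ≤ x ^ (0.9 : ℝ) * (r * x ^ (0.1 : ℝ)) / 2 := by
            apply div_le_div_of_nonneg_right ?_ (by norm_num)
            exact mul_le_mul_of_nonneg_left this hx09pos.le
      _ = r * x / 2 := by rw [show x ^ (0.9 : ℝ) * (r * x ^ (0.1 : ℝ)) = r * (x ^ (0.9:ℝ) * x ^ (0.1:ℝ)) by ring, hxsplit]
    have hlog2 : (0.6 : ℝ) ≤ Real.log 2 := by
      have := Real.log_two_gt_d9; linarith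
    have hpos : 42 * x ^ (0.9 : ℝ) ≤ (r * x / 2 - x ^ (0.9 : ℝ)) * Real.log 2 := by
      have h5 : 71 * x ^ (0.9 : ℝ) ≤ r * x / 2 - x ^ (0.9 : ℝ) := by linarith
      calc 42 * x ^ (0.9 : ℝ) ≤ (71 * x ^ (0.9 : ℝ)) * (0.6 : ℝ) := by nlinarith
      _ ≤ (r * x / 2 - x ^ (0.9 : ℝ)) * Real.log 2 := by
            apply mul_le_mul h5 hlog2 (by norm_num) (by linarith)
    exact hLHS.trans hpos
  -- convert exponent inequality to rpow inequality
  have hmain : (x + 1) ^ (x ^ (0.8 : ℝ) + 1) ≤ (2 : ℝ) ^ (r * x / 2 - x ^ (0.9 : ℝ)) := by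
    rw [rpow_def_of_pos (by linarith : (0:ℝ) < x + 1), rpow_def_of_pos (by norm_num : (0:ℝ) < 2)]
    refine Real.exp_le_exp.2 ?_
    rw [mul_comm (Real.log (x + 1)), mul_comm (Real.log 2)]
    exact hlog
  have hd : r * x ≤ ((⌈r * x⌉₊ : ℕ) : ℝ) := Nat.le_ceil _
  calc (((s + 1) * (n + 1) ^ s * p ^ s : ℕ) : ℝ)
      ≤ (x + 1) ^ (x ^ (0.8 : ℝ) + 1) * (2 : ℝ) ^ (x ^ (0.9 : ℝ)) := hstep1
    _ ≤ (2 : ℝ) ^ (r * x / 2 - x ^ (0.9 : ℝ)) * (2 : ℝ) ^ (x ^ (0.9 : ℝ)) := by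
        apply mul_le_mul_of_nonneg_right hmain (by positivity)
    _ = (2 : ℝ) ^ (r * x / 2) := by
        rw [← rpow_add (by norm_num : (0:ℝ) < 2)]
        congr 1
        ring
    _ ≤ (2 : ℝ) ^ ((((⌈r * x⌉₊ : ℕ)) : ℝ) / 2) := by
        apply rpow_le_rpow_of_exponent_le (by norm_num)
        linarith


/-- Fix `r ∈ (0,1]` and let `d = ⌈rn⌉`, and let `p` be a prime with
`2^{n^{0.1}}/2 ≤ p ≤ 2^{n^{0.1}}`. There is a constant `C = C(r)` such that for every `n` and
every fixed `M ∈ M_{n,d}`, if `Ξ` is an `n × n` matrix of i.i.d. Rademacher signs, the probability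
that some nonzero `v ∈ F_p^n` with `|supp(v)| ≤ n^{0.8}` satisfies `(Ξ ∘ M)v = 0` over `F_p`
is at most `C·2^{−d/2}` (probability expressed by counting sign matrices `ξ`). -/
theorem rrd_no_small_support_null :
    ∀ r : ℝ, 0 < r → r ≤ 1 → ∃ C : ℝ, 0 < C ∧
      ∀ (n p : ℕ), p.Prime →
        (2 : ℝ) ^ ((n : ℝ) ^ (0.1 : ℝ)) / 2 ≤ (p : ℝ) →
        (p : ℝ) ≤ (2 : ℝ) ^ ((n : ℝ) ^ (0.1 : ℝ)) →
        ∀ M : Matrix (Fin n) (Fin n) ℕ, isRRD n ⌈r * (n : ℝ)⌉₊ M →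
          (Set.ncard {ξ : Fin n → Fin n → Bool |
              ∃ v : Fin n → ZMod p, v ≠ 0 ∧ (suppCard p v : ℝ) ≤ (n : ℝ) ^ (0.8 : ℝ) ∧
                ∀ i, (∑ j, (if ξ i j then (M i j : ZMod p) else -(M i j : ZMod p)) * v j) = 0} : ℝ)
              / 2 ^ (n * n) ≤
            C * (2 : ℝ) ^ (-(⌈r * (n : ℝ)⌉₊ : ℝ) / 2) := by
  intro r hr hr1
  set N : ℕ := ⌈(144 / r) ^ (10 : ℝ)⌉₊ + 2 ^ 20 with hN
  refine ⟨(2 : ℝ) ^ (N : ℕ), by positivity, ?_⟩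
  intro n p hp hplow hphigh M hM
  haveI : Fact p.Prime := ⟨hp⟩
  have h2nn : (0 : ℝ) < (2 : ℝ) ^ (n * n) := by positivity
  set d : ℕ := ⌈r * (n : ℝ)⌉₊ with hd
  have hdn : d ≤ n := by
    rw [hd]
    refine Nat.ceil_le.2 ?_
    calc r * (n : ℝ) ≤ 1 * (n : ℝ) := mul_le_mul_of_nonneg_right hr1 (Nat.cast_nonneg n)
    _ = (n : ℝ) := one_mul _
  have hC1 : (1 : ℝ) ≤ (2 : ℝ) ^ (N : ℕ) := one_le_pow₀ one_le_two
  set SET : Set (Fin n → Fin n → Bool) := {ξ : Fin n → Fin n → Bool |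
      ∃ v : Fin n → ZMod p, v ≠ 0 ∧ (suppCard p v : ℝ) ≤ (n : ℝ) ^ (0.8 : ℝ) ∧
        ∀ i, (∑ j, (if ξ i j then (M i j : ZMod p) else -(M i j : ZMod p)) * v j) = 0} with hSET
  by_cases hn : n < N
  · -- small n : trivial bound
    have h1 : (SET.ncard : ℝ) ≤ 2 ^ (n * n) := by
      have h2 : SET.ncard ≤ 2 ^ (n * n) := by
        calc SET.ncard ≤ (Set.univ : Set (Fin n → Fin n → Bool)).ncard :=
              Set.ncard_le_ncard (Set.subset_univ _) Set.finite_univ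
        _ = 2 ^ (n * n) := by
              rw [Set.ncard_univ, Nat.card_eq_fintype_card]
              simp [← pow_mul]
      exact_mod_cast (Nat.cast_le.2 h2).trans (le_of_eq (by push_cast; ring))
    have h3 : (1 : ℝ) ≤ (2 : ℝ) ^ (N : ℕ) * (2 : ℝ) ^ (-(d : ℕ) / 2 : ℝ) := by
      have e1 : ((2 : ℝ) ^ (N : ℕ)) = (2 : ℝ) ^ ((N : ℝ)) := (Real.rpow_natCast 2 N).symm
      rw [e1, ← Real.rpow_add (by norm_num : (0:ℝ) < 2)]
      have hdN : ((d : ℕ) : ℝ) ≤ (N : ℝ) := by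
        exact_mod_cast Nat.cast_le.2 (hdn.trans hn.le)
      calc (1 : ℝ) = (2 : ℝ) ^ (0 : ℝ) := (Real.rpow_zero 2).symm
      _ ≤ (2 : ℝ) ^ ((N : ℝ) + -(d : ℕ) / 2) := by
            apply Real.rpow_le_rpow_of_exponent_le one_le_two
            have hN0 : (0 : ℝ) ≤ (N : ℝ) := Nat.cast_nonneg N
            linarith
    calc (SET.ncard : ℝ) / 2 ^ (n * n) ≤ 1 := by
          rw [div_le_one h2nn]; exact h1
    _ ≤ (2 : ℝ) ^ (N : ℕ) * (2 : ℝ) ^ (-(d : ℕ) / 2 : ℝ) := h3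
  · -- large n
    push_neg at hn
    have hxN : ((N : ℕ) : ℝ) ≤ (n : ℝ) := Nat.cast_le.2 hn
    have hn2 : (144 / r) ^ (10 : ℝ) ≤ (n : ℝ) := by
      calc (144 / r) ^ (10 : ℝ) ≤ (⌈(144 / r) ^ (10 : ℝ)⌉₊ : ℝ) := Nat.le_ceil _
      _ ≤ ((N : ℕ) : ℝ) := by exact_mod_cast Nat.cast_le.2 (by omega : ⌈(144 / r) ^ (10 : ℝ)⌉₊ ≤ N)
      _ ≤ (n : ℝ) := hxN
    have hn1 : (2 : ℝ) ^ (20 : ℕ) ≤ (n : ℝ) := by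
      calc (2 : ℝ) ^ (20 : ℕ) = ((2 ^ 20 : ℕ) : ℝ) := by push_cast; ring
      _ ≤ ((N : ℕ) : ℝ) := by exact_mod_cast Nat.cast_le.2 (by omega : 2 ^ 20 ≤ N)
      _ ≤ (n : ℝ) := hxN
    -- p is odd
    have hx01 : (4 : ℝ) ≤ (n : ℝ) ^ (0.1 : ℝ) := by
      have h1 : ((2 : ℝ) ^ (20 : ℕ)) ^ (0.1 : ℝ) ≤ (n : ℝ) ^ (0.1 : ℝ) :=
        Real.rpow_le_rpow (by positivity) hn1 (by norm_num)
      have h2 : ((2 : ℝ) ^ (20 : ℕ)) ^ (0.1 : ℝ) = 4 := by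
        rw [← Real.rpow_natCast 2 20, ← Real.rpow_mul (by norm_num : (0:ℝ) ≤ 2),
          show ((20 : ℕ) : ℝ) * (0.1 : ℝ) = ((2 : ℕ) : ℝ) by norm_num, Real.rpow_natCast]
        norm_num
      linarith
    have hp8 : (8 : ℝ) ≤ (p : ℝ) := by
      have h16 : (16 : ℝ) ≤ (2 : ℝ) ^ ((n : ℝ) ^ (0.1 : ℝ)) := by
        calc (16 : ℝ) = (2 : ℝ) ^ ((4 : ℕ) : ℝ) := by
              rw [Real.rpow_natCast]; norm_num
        _ ≤ (2 : ℝ) ^ ((n : ℝ) ^ (0.1 : ℝ)) := by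
              apply Real.rpow_le_rpow_of_exponent_le one_le_two
              exact_mod_cast hx01
      linarith
    have hp2' : 2 < p := by exact_mod_cast lt_of_lt_of_le (by norm_num : (2 : ℝ) < 8) hp8
    have hp2 : (2 : ZMod p) ≠ 0 := by
      have h2 : ((2 : ℕ) : ZMod p) ≠ 0 := by
        intro h0
        have hdvd : p ∣ 2 := (ZMod.natCast_eq_zero_iff 2 p).1 h0
        have := Nat.le_of_dvd (by norm_num) hdvd
        omega
      exact_mod_cast h2
    have hcount := main_count (p := p) (d := d) hp2 M hM
    have hana := analytic_bound r hr n p hn1 hn2 hphigh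
    set s : ℕ := ⌊(n : ℝ) ^ (0.8 : ℝ)⌋₊ with hs
    set A : ℕ := (s + 1) * (n + 1) ^ s * p ^ s with hA
    have hn1' : 1 ≤ n := by
      have h0 : (1 : ℝ) ≤ (n : ℝ) := le_trans (by norm_num) hn1
      exact_mod_cast h0
    have hdnn : d ≤ n * n := hdn.trans (Nat.le_mul_of_pos_left n hn1')
    have e1 : ((A * 2 ^ (n * n - d) : ℕ) : ℝ) = (A : ℝ) * (2 : ℝ) ^ (n * n - d : ℕ) := by
      push_cast
      ring
    have h1 : (SET.ncard : ℝ) ≤ (A : ℝ) * (2 : ℝ) ^ (n * n - d : ℕ) := by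
      rw [← e1]
      exact Nat.cast_le.2 (hcount.trans (le_of_eq (by ring)))
    rw [div_le_iff₀ h2nn]
    have key : (A : ℝ) * (2 : ℝ) ^ (n * n - d : ℕ)
        ≤ (2 : ℝ) ^ (N : ℕ) * (2 : ℝ) ^ (-(d : ℝ) / 2) * 2 ^ (n * n) := by
      have hArp : (A : ℝ) ≤ (2 : ℝ) ^ (((d : ℕ) : ℝ) / 2) := hana
      have e3 : ((2 : ℝ) ^ (n * n - d : ℕ)) = (2 : ℝ) ^ (((n * n : ℕ) : ℝ) - (d : ℝ)) := by
        rw [← Real.rpow_natCast 2 (n * n - d)]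
        congr 1
        push_cast [Nat.cast_sub hdnn]
        ring
      have e4 : ((2 : ℝ) ^ (n * n) : ℝ) = (2 : ℝ) ^ ((n * n : ℕ) : ℝ) :=
        (Real.rpow_natCast 2 (n * n)).symm
      calc (A : ℝ) * (2 : ℝ) ^ (n * n - d : ℕ)
          ≤ (2 : ℝ) ^ (((d : ℕ) : ℝ) / 2) * (2 : ℝ) ^ (((n * n : ℕ) : ℝ) - (d : ℝ)) := by
            rw [e3]
            exact mul_le_mul_of_nonneg_right hArp (by positivity)
        _ = (2 : ℝ) ^ ((((d : ℕ) : ℝ) / 2) + (((n * n : ℕ) : ℝ) - (d : ℝ))) :=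
            (Real.rpow_add (by norm_num : (0:ℝ) < 2) _ _).symm
        _ = (2 : ℝ) ^ ((-(d : ℝ) / 2) + ((n * n : ℕ) : ℝ)) := by
            congr 1
            ring
        _ = (2 : ℝ) ^ (-(d : ℝ) / 2) * (2 : ℝ) ^ ((n * n : ℕ) : ℝ) :=
            Real.rpow_add (by norm_num : (0:ℝ) < 2) _ _
        _ ≤ (2 : ℝ) ^ (N : ℕ) * ((2 : ℝ) ^ (-(d : ℝ) / 2) * (2 : ℝ) ^ ((n * n : ℕ) : ℝ)) :=
            le_mul_of_one_le_left (by positivity) hC1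
        _ = (2 : ℝ) ^ (N : ℕ) * (2 : ℝ) ^ (-(d : ℝ) / 2) * 2 ^ (n * n) := by
            rw [mul_assoc, e4]
    exact h1.trans key
end

section
/- Let n be even, let p be a prime with 2^{n^{0.1}}/2 ≤ p ≤ 2^{n^{0.1}}, and let Q_n be a uniformly random n×n matrix with entries in {0,1} each of whose rows sums to n/2. There is an absolute constant C such that for all sufficiently large even n, the probability that there exists a nonzero vector v in F_p^n with Q_n v = 0 over F_p and L(v) ≥ n − n^{0.8} is at most C·2^{−n/100}. -/
open scoped BigOperators

/-- `Q ∈ 𝒬_n`: `Q` is an `n × n` matrix with entries in `{0,1}` each of whose rows sums to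
`n/2`. -/
def isRowReg (n : ℕ) (Q : Matrix (Fin n) (Fin n) ℕ) : Prop :=
  (∀ i j, Q i j = 0 ∨ Q i j = 1) ∧ (∀ i, ∑ j, Q i j = n / 2)

/-- `L(v)`: the size of the largest level set of `v ∈ F_p^n`. -/
noncomputable def levelMax (p n : ℕ) (v : Fin n → ZMod p) : ℝ :=
  ⨆ x : ZMod p, (Set.ncard {i : Fin n | v i = x} : ℝ)


/-!
Rows of `Q_n` are the 0/1 vectors `r` with `n / 2` ones. Let `v ≠ 0` agree with some `x`
outside at most `k ≤ n ^ 0.8` coordinates. If `v` is constant, then `r ⬝ v = (n / 2) x ≠ 0`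
since `0 < n / 2 < p`. Otherwise fix `a` with `v a ≠ x`: exchanging the entries of `r` at `a`
and at a coordinate `j` of the level set `{v = x}` with `r j ≠ r a` shifts `r ⬝ v` by
`±(x - v a) ≠ 0`. A row orthogonal to `v` admits at least `n / 2 - k` such exchanges and a row
is reached by at most `n` of them, so at most `4 / 5` of all rows are orthogonal to `v`.
A union bound over the at most `p (n p + 1) ^ k ≤ 2 ^ (n ^ 0.1 (2 k + 1)) ≤ 2 ^ (0.24 n)`
such `v` then bounds the bad matrices by
`2 ^ (0.24 n) (4 / 5) ^ n |𝒬_n| ≤ 2 ^ (-n / 100) |𝒬_n|`.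
-/

open Finset Filter

theorem Fintype.sum_comp_swap_mul {ι R : Type*} [Fintype ι] [DecidableEq ι] [CommRing R]
    (f g : ι → R) {a b : ι} (hab : a ≠ b) :
    ∑ j, f (Equiv.swap a b j) * g j = ∑ j, f j * g j + (f a - f b) * (g b - g a) := by
  have hsupp : ∀ j, j ≠ a ∧ j ≠ b → f (Equiv.swap a b j) * g j - f j * g j = 0 :=
    fun j hj => by rw [Equiv.swap_apply_of_ne_of_ne hj.1 hj.2, sub_self]
  rw [← sub_eq_iff_eq_add', ← sum_sub_distrib, Fintype.sum_eq_add a b hab hsupp,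
    Equiv.swap_apply_left, Equiv.swap_apply_right]
  ring

def halfRows (n : ℕ) : Finset (Fin n → ℕ) :=
  {r ∈ Fintype.piFinset fun _ => {0, 1} | ∑ j, r j = n / 2}

def orthRows {K : Type*} [CommRing K] [DecidableEq K] {n : ℕ} (v : Fin n → K) :
    Finset (Fin n → ℕ) :=
  {r ∈ halfRows n | ∑ j, (r j : K) * v j = 0}

section halfRows

variable {n : ℕ} {r : Fin n → ℕ}

theorem mem_halfRows :
    r ∈ halfRows n ↔ (∀ j, r j = 0 ∨ r j = 1) ∧ ∑ j, r j = n / 2 := by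
  simp [halfRows]

theorem isRowReg_iff_forall_mem_halfRows {Q : Matrix (Fin n) (Fin n) ℕ} :
    isRowReg n Q ↔ ∀ i, Q i ∈ halfRows n := by
  simp only [isRowReg, mem_halfRows]
  exact ⟨fun h i => ⟨h.1 i, h.2 i⟩, fun h => ⟨fun i => (h i).1, fun i => (h i).2⟩⟩

theorem ncard_isRowReg :
    {Q : Matrix (Fin n) (Fin n) ℕ | isRowReg n Q}.ncard = #(halfRows n) ^ n := by
  show {Q : Fin n → Fin n → ℕ | isRowReg n Q}.ncard = _
  have : {Q : Fin n → Fin n → ℕ | isRowReg n Q} =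
      ↑(Fintype.piFinset fun _ : Fin n => halfRows n) := by
    ext Q
    exact isRowReg_iff_forall_mem_halfRows.trans Fintype.mem_piFinset.symm
  rw [this, Set.ncard_coe_finset, Fintype.card_piFinset, prod_const, card_univ,
    Fintype.card_fin]

theorem comp_swap_mem_halfRows (hr : r ∈ halfRows n) (a b : Fin n) :
    r ∘ Equiv.swap a b ∈ halfRows n := by
  rw [mem_halfRows] at hr ⊢
  exact ⟨fun j => hr.1 _, (Equiv.sum_comp (Equiv.swap a b) r).trans hr.2⟩

theorem card_filter_eq_one_of_mem_halfRows (hr : r ∈ halfRows n) : #{j | r j = 1} = n / 2 := by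
  rw [← (mem_halfRows.1 hr).2, card_filter]
  refine sum_congr rfl fun j _ => ?_
  rcases (mem_halfRows.1 hr).1 j with h | h <;> simp [h]

theorem half_le_card_filter_ne_of_mem_halfRows (hr : r ∈ halfRows n) (a : Fin n) :
    n / 2 ≤ #{j | r j ≠ r a} := by
  have hones := card_filter_eq_one_of_mem_halfRows hr
  have hsplit := card_filter_add_card_filter_not (s := univ) (fun j => r j = 1)
  rw [card_univ, Fintype.card_fin] at hsplit
  rcases (mem_halfRows.1 hr).1 a with ha | ha
  · refine hones.symm.le.trans (card_le_card fun j => ?_)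
    simp only [mem_filter, mem_univ, true_and, ha]
    omega
  · simp only [ha, ne_eq]
    omega

theorem injOn_comp_swap (a : Fin n) :
    Set.InjOn (fun j => r ∘ Equiv.swap a j) {j | r j ≠ r a} := by
  intro j hj j' _ hjj'
  by_contra hne
  have haj : j ≠ a := fun h => hj (congrArg r h)
  have := congrFun hjj' j
  simp only [Function.comp_apply, Equiv.swap_apply_right,
    Equiv.swap_apply_of_ne_of_ne haj hne] at this
  exact hj this.symm

end halfRows

section orthRows

variable {K : Type*} [CommRing K] [IsDomain K] [DecidableEq K] {n k : ℕ} {v : Fin n → K}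
  {x : K} {r : Fin n → ℕ}

theorem comp_swap_mem_sdiff_orthRows (hr : r ∈ orthRows v) {a j : Fin n} (ha : v a ≠ x)
    (hvj : v j = x) (hrj : r j ≠ r a) : r ∘ Equiv.swap a j ∈ halfRows n \ orthRows v := by
  obtain ⟨hrR, hdot⟩ := mem_filter.1 hr
  have hcoef : (r a : K) - r j ≠ 0 := by
    rcases (mem_halfRows.1 hrR).1 a with h₁ | h₁ <;>
      rcases (mem_halfRows.1 hrR).1 j with h₂ | h₂ <;> simp_all
  have hdot' : ∑ i, ((r ∘ Equiv.swap a j) i : K) * v i ≠ 0 := by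
    have haj : a ≠ j := by rintro rfl; exact ha hvj
    rw [Function.comp_def, Fintype.sum_comp_swap_mul (fun i => (r i : K)) v haj, hdot, zero_add,
      hvj]
    exact mul_ne_zero hcoef (sub_ne_zero.2 (Ne.symm ha))
  exact mem_sdiff.2 ⟨comp_swap_mem_halfRows hrR a j, fun h => hdot' (mem_filter.1 h).2⟩

theorem card_orthRows_mul_le (hk : #{i | v i ≠ x} ≤ k) {a : Fin n} (ha : v a ≠ x) :
    #(orthRows v) * (n / 2 - k) ≤ #(halfRows n \ orthRows v) * n := by
  classical
  let swapRel : (Fin n → ℕ) → (Fin n → ℕ) → Prop :=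
    fun r s => ∃ j, r j ≠ r a ∧ v j = x ∧ s = r ∘ Equiv.swap a j
  refine card_mul_le_card_mul swapRel (fun r hr => ?_) (fun s _ => ?_)
  · have hexchanges : n / 2 - k ≤ #{j | r j ≠ r a ∧ v j = x} := by
      have hhalf := half_le_card_filter_ne_of_mem_halfRows (mem_filter.1 hr).1 a
      have hsplit := card_filter_add_card_filter_not (s := {j | r j ≠ r a}) (fun j => v j = x)
      have hdev : #{j ∈ {j | r j ≠ r a} | ¬v j = x} ≤ k :=
        (card_le_card (filter_subset_filter _ (subset_univ _))).trans hk
      rw [filter_filter] at hsplit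
      omega
    refine hexchanges.trans (card_le_card_of_injOn _ (fun j hj => ?_)
      ((injOn_comp_swap (r := r) a).mono fun j hj => by simp_all))
    simp only [coe_filter, mem_univ, true_and, Set.mem_ofPred_eq] at hj
    exact mem_filter.2 ⟨comp_swap_mem_sdiff_orthRows hr ha hj.2 hj.1, j, hj.1, hj.2, rfl⟩
  · calc #(bipartiteBelow swapRel (orthRows v) s)
        ≤ #(univ.image fun j => s ∘ Equiv.swap a j) := card_le_card fun r hr => by
          obtain ⟨-, j, -, -, rfl⟩ := mem_filter.1 hr
          exact mem_image.2 ⟨j, mem_univ _, by ext; simp [Equiv.swap_apply_self]⟩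
      _ ≤ n := card_image_le.trans (card_univ.trans (Fintype.card_fin n)).le

theorem orthRows_const_eq_empty (hn : ((n / 2 : ℕ) : K) ≠ 0) (hx : x ≠ 0) :
    orthRows (fun _ : Fin n => x) = ∅ := by
  refine eq_empty_of_forall_notMem fun r hr => ?_
  obtain ⟨hrR, hdot⟩ := mem_filter.1 hr
  rw [← sum_mul, ← Nat.cast_sum, (mem_halfRows.1 hrR).2] at hdot
  exact mul_ne_zero hn hx hdot

theorem five_mul_card_orthRows_le (hn : ((n / 2 : ℕ) : K) ≠ 0) (hnk : 4 * k + 2 ≤ n)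
    (hv : v ≠ 0) (hk : #{i | v i ≠ x} ≤ k) : 5 * #(orthRows v) ≤ 4 * #(halfRows n) := by
  by_cases hconst : ∀ i, v i = x
  · obtain rfl : v = fun _ => x := funext hconst
    have hx : x ≠ 0 := fun h => hv (funext fun _ => h)
    simp [orthRows_const_eq_empty hn hx]
  push Not at hconst
  obtain ⟨a, ha⟩ := hconst
  have hsub : orthRows v ⊆ halfRows n := filter_subset _ _
  have hcount := card_orthRows_mul_le hk ha
  rw [card_sdiff_of_subset hsub] at hcount
  have hquarter : n ≤ 4 * (n / 2 - k) := by omega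
  have : #(orthRows v) * n ≤ 4 * (#(halfRows n) - #(orthRows v)) * n :=
    calc #(orthRows v) * n ≤ #(orthRows v) * (4 * (n / 2 - k)) := Nat.mul_le_mul_left _ hquarter
      _ ≤ 4 * (#(halfRows n) - #(orthRows v)) * n := by rw [mul_left_comm, mul_assoc]; omega
  have := Nat.le_of_mul_le_mul_right this (by omega)
  have := card_le_card hsub
  omega

end orthRows

theorem ncard_le_sum_card_orthRows_pow {K : Type*} [CommRing K] [DecidableEq K] {n : ℕ}
    (V : Finset (Fin n → K)) (S : Set (Matrix (Fin n) (Fin n) ℕ))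
    (hS : ∀ Q ∈ S, isRowReg n Q ∧ ∃ v ∈ V, ∀ i, ∑ j, (Q i j : K) * v j = 0) :
    S.ncard ≤ ∑ v ∈ V, #(orthRows v) ^ n := by
  set T : Finset (Fin n → Fin n → ℕ) :=
    V.biUnion fun v => Fintype.piFinset fun _ => orthRows v
  have hsub : S ⊆ (T : Set (Fin n → Fin n → ℕ)) := by
    intro Q hQ
    obtain ⟨hreg, v, hvV, horth⟩ := hS Q hQ
    rw [isRowReg_iff_forall_mem_halfRows] at hreg
    exact mem_biUnion.2
      ⟨v, hvV, Fintype.mem_piFinset.2 fun i => mem_filter.2 ⟨hreg i, horth i⟩⟩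
  calc S.ncard ≤ #T :=
        (Set.ncard_le_ncard hsub (finite_toSet _)).trans (Set.ncard_coe_finset _).le
    _ ≤ ∑ v ∈ V, #(orthRows v) ^ n := card_biUnion_le.trans (by simp)

def almostConst (ι K : Type*) [Fintype ι] [DecidableEq ι] [Fintype K] [DecidableEq K]
    (k : ℕ) : Finset (ι → K) :=
  {v | ∃ x, #{i | v i ≠ x} ≤ k}

section almostConst

variable {ι K : Type*} [Fintype ι] [DecidableEq ι] [Fintype K] [DecidableEq K]

theorem card_filter_card_ne_le (x : K) (k : ℕ) :
    #{v : ι → K | #{i | v i ≠ x} ≤ k} ≤ (Fintype.card ι * Fintype.card K + 1) ^ k := by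
  induction k with
  | zero =>
    refine (card_le_one.2 fun v hv w hw => funext fun i => ?_).trans (pow_zero _).ge
    simp only [mem_filter, mem_univ, true_and, nonpos_iff_eq_zero, card_eq_zero,
      filter_eq_empty_iff, not_not] at hv hw
    rw [hv trivial, hw trivial]
  | succ k ih =>
    set A : Finset (ι → K) := {v | #{i | v i ≠ x} ≤ k}
    have hsub : ({v | #{i | v i ≠ x} ≤ k + 1} : Finset (ι → K)) ⊆
        A ∪ (univ ×ˢ A).image fun ((i, c), w) => Function.update w i c := by
      intro v hv
      rw [mem_filter] at hv
      by_cases hvk : #{i | v i ≠ x} ≤ k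
      · exact mem_union_left _ (mem_filter.2 ⟨mem_univ _, hvk⟩)
      obtain ⟨i, hi⟩ : ∃ i, v i ≠ x := by
        by_contra! h
        simp [h] at hvk
      refine mem_union_right _ (mem_image.2 ⟨((i, v i), Function.update v i x), ?_, by simp⟩)
      refine mem_product.2 ⟨mem_univ _, mem_filter.2 ⟨mem_univ _, ?_⟩⟩
      have hupdate : ({j | Function.update v i x j ≠ x} : Finset ι) =
          ({j | v j ≠ x} : Finset ι).erase i := by
        ext j
        by_cases hj : j = i <;> simp [hj]
      rw [hupdate, card_erase_of_mem (s := {j | v j ≠ x}) (by simpa using hi)]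
      omega
    calc _ ≤ #A + #(univ ×ˢ A) := (card_le_card hsub).trans
          ((card_union_le _ _).trans (Nat.add_le_add_left card_image_le _))
      _ = (Fintype.card ι * Fintype.card K + 1) * #A := by
        rw [card_product, card_univ, Fintype.card_prod]; ring
      _ ≤ _ := by rw [pow_succ']; exact Nat.mul_le_mul_left _ ih

theorem card_almostConst_le (k : ℕ) :
    #(almostConst ι K k) ≤ Fintype.card K * (Fintype.card ι * Fintype.card K + 1) ^ k := by
  have : almostConst ι K k = univ.biUnion fun x => {v : ι → K | #{i | v i ≠ x} ≤ k} := by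
    ext v; simp [almostConst]
  rw [this]
  refine card_biUnion_le.trans ((sum_le_card_nsmul _ _ _ fun x _ => ?_).trans_eq
    (by rw [card_univ, smul_eq_mul]))
  exact card_filter_card_ne_le x k

theorem card_almostConst_le_pow {P : ℝ} (hK : (Fintype.card K : ℝ) ≤ P)
    (hι : (Fintype.card ι : ℝ) + 1 ≤ P) (k : ℕ) :
    (#(almostConst ι K k) : ℝ) ≤ P ^ (2 * k + 1) := by
  have hP : 1 ≤ P := by linarith [(Nat.cast_nonneg (Fintype.card ι) : (0 : ℝ) ≤ _)]
  have hbase : (Fintype.card ι : ℝ) * Fintype.card K + 1 ≤ P ^ 2 := by nlinarith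
  calc (#(almostConst ι K k) : ℝ)
      ≤ Fintype.card K * ((Fintype.card ι : ℝ) * Fintype.card K + 1) ^ k := by
        exact_mod_cast card_almostConst_le k
    _ ≤ P * (P ^ 2) ^ k := by gcongr
    _ = P ^ (2 * k + 1) := by ring

end almostConst

theorem mem_almostConst_of_sub_le_levelMax {p n : ℕ} [NeZero p] {v : Fin n → ZMod p} {t : ℝ}
    (h : n - t ≤ levelMax p n v) : v ∈ almostConst (Fin n) (ZMod p) ⌊t⌋₊ := by
  obtain ⟨x, hx⟩ := Finite.exists_max fun x : ZMod p => ({i : Fin n | v i = x}.ncard : ℝ)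
  have hsup : levelMax p n v ≤ {i : Fin n | v i = x}.ncard := ciSup_le hx
  have hncard : {i : Fin n | v i = x}.ncard = #{i | v i = x} := by
    rw [← Set.ncard_coe_finset, coe_filter]; simp
  have hsplit := card_filter_add_card_filter_not (s := univ) (fun i => v i = x)
  rw [card_univ, Fintype.card_fin] at hsplit
  refine mem_filter.2 ⟨mem_univ _, x, Nat.le_floor ?_⟩
  have : (#{i | v i = x} : ℝ) + #{i | ¬v i = x} = n := by exact_mod_cast hsplit
  rw [hncard] at hsup
  simp only [ne_eq]
  linarith

theorem five_pow_mul_ncard_le {p n : ℕ} [Fact p.Prime] {t : ℝ} (hp : n / 2 < p)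
    (hnt : 4 * ⌊t⌋₊ + 2 ≤ n) :
    5 ^ n * {Q : Matrix (Fin n) (Fin n) ℕ | isRowReg n Q ∧
        ∃ v : Fin n → ZMod p, v ≠ 0 ∧ (∀ i, ∑ j, (Q i j : ZMod p) * v j = 0) ∧
          (n : ℝ) - t ≤ levelMax p n v}.ncard
      ≤ #(almostConst (Fin n) (ZMod p) ⌊t⌋₊) * (4 * #(halfRows n)) ^ n := by
  set V := {v ∈ almostConst (Fin n) (ZMod p) ⌊t⌋₊ | v ≠ 0}
  have hn : ((n / 2 : ℕ) : ZMod p) ≠ 0 := by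
    rw [Ne, ZMod.natCast_eq_zero_iff]
    exact fun h => (Nat.le_of_dvd (by omega) h).not_gt hp
  calc _ ≤ 5 ^ n * ∑ v ∈ V, #(orthRows v) ^ n := by
        refine Nat.mul_le_mul_left _ (ncard_le_sum_card_orthRows_pow V _ ?_)
        rintro Q ⟨hreg, v, hv0, horth, hlev⟩
        exact ⟨hreg, v, mem_filter.2 ⟨mem_almostConst_of_sub_le_levelMax hlev, hv0⟩, horth⟩
    _ ≤ ∑ _v ∈ V, (4 * #(halfRows n)) ^ n := by
      rw [mul_sum]
      refine sum_le_sum fun v hv => ?_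
      obtain ⟨hvC, hv0⟩ := mem_filter.1 hv
      obtain ⟨x, hx⟩ := (mem_filter.1 hvC).2
      rw [← mul_pow]
      exact Nat.pow_le_pow_left (five_mul_card_orthRows_le hn hnt hv0 hx) n
    _ ≤ _ := by rw [sum_const, smul_eq_mul]; exact Nat.mul_le_mul_right _ (card_filter_le _ _)

theorem eventually_add_one_le_two_rpow_rpow {a : ℝ} (ha : 0 < a) :
    ∀ᶠ x : ℝ in atTop, x + 1 ≤ 2 ^ x ^ a := by
  have hexp : ∀ᶠ t : ℝ in atTop, 2 * t ^ a⁻¹ ≤ 2 ^ t := by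
    filter_upwards [(isLittleO_rpow_exp_pos_mul_atTop a⁻¹ (Real.log_pos one_lt_two)).bound
      (by norm_num : (0 : ℝ) < 1 / 2), eventually_ge_atTop 0] with t ht ht0
    rw [Real.norm_of_nonneg (Real.rpow_nonneg ht0 _),
      Real.norm_of_nonneg (Real.exp_pos _).le] at ht
    rw [Real.rpow_def_of_pos two_pos]
    linarith
  filter_upwards [(tendsto_rpow_atTop ha).eventually hexp, eventually_ge_atTop 1] with x hx hx1
  rw [Real.rpow_rpow_inv (by linarith) ha.ne'] at hx
  linarith

theorem eventually_rpow_le_mul {a c : ℝ} (ha : a < 1) (hc : 0 < c) :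
    ∀ᶠ x : ℝ in atTop, x ^ a ≤ c * x := by
  filter_upwards [(tendsto_rpow_neg_atTop (sub_pos.2 ha)).eventually_le_const hc,
    eventually_gt_atTop 0] with x hx hx0
  calc x ^ a = x ^ (-(1 - a)) * x := by rw [← Real.rpow_add_one hx0.ne']; ring_nf
    _ ≤ c * x := by gcongr

theorem eventually_exponent_bounds : ∀ᶠ x : ℝ in atTop,
    x + 1 ≤ 2 ^ x ^ (0.1 : ℝ) ∧ 4 * x ^ (0.8 : ℝ) + 2 ≤ x ∧
      x ^ (0.1 : ℝ) * (2 * x ^ (0.8 : ℝ) + 1) ≤ (1 / 4 - 1 / 100) * x := by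
  filter_upwards [eventually_add_one_le_two_rpow_rpow (by norm_num : (0 : ℝ) < 0.1),
    eventually_rpow_le_mul (by norm_num : (0.8 : ℝ) < 1) (by norm_num : (0 : ℝ) < 1 / 8),
    eventually_rpow_le_mul (by norm_num : (0.9 : ℝ) < 1) (by norm_num : (0 : ℝ) < 1 / 10),
    eventually_rpow_le_mul (by norm_num : (0.1 : ℝ) < 1) (by norm_num : (0 : ℝ) < 1 / 100),
    eventually_ge_atTop (4 : ℝ)] with x hx h08 h09 h01 hx4
  have hexpand :
      x ^ (0.1 : ℝ) * (2 * x ^ (0.8 : ℝ) + 1) = 2 * x ^ (0.9 : ℝ) + x ^ (0.1 : ℝ) := by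
    rw [mul_add, mul_left_comm, ← Real.rpow_add (by linarith)]; norm_num
  exact ⟨hx, by linarith, by linarith⟩

theorem four_fifths_pow_le (n : ℕ) : (4 / 5 : ℝ) ^ n ≤ 2 ^ (-(n : ℝ) / 4) := by
  have hbase : (4 / 5 : ℝ) ≤ 2 ^ (-(1 / 4) : ℝ) := by
    rw [← Real.rpow_le_rpow_iff (by norm_num) (by positivity) (by norm_num : (0 : ℝ) < 4),
      ← Real.rpow_mul (by norm_num)]
    norm_num
  calc (4 / 5 : ℝ) ^ n ≤ (2 ^ (-(1 / 4) : ℝ)) ^ n := by gcongr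
    _ = 2 ^ (-(n : ℝ) / 4) := by rw [← Real.rpow_mul_natCast (by norm_num)]; ring_nf

/-- Let `n` be even, let `p` be a prime with `2^{n^{0.1}}/2 ≤ p ≤ 2^{n^{0.1}}`, and let `Q_n`
be a uniformly random element of `𝒬_n`. There is an absolute constant `C` such that for all
sufficiently large even `n`, the probability that some nonzero `v ∈ F_p^n` with
`L(v) ≥ n − n^{0.8}` satisfies `Q_n v = 0` over `F_p` is at most `C·2^{−n/100}` (stated as a
counting bound). -/
theorem eliminate_almost_constant_null :
    ∃ C : ℝ, 0 < C ∧ ∃ N : ℕ, ∀ n : ℕ, N ≤ n → Even n →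
      ∀ (p : ℕ), p.Prime →
        (2 : ℝ) ^ ((n : ℝ) ^ (0.1 : ℝ)) / 2 ≤ (p : ℝ) →
        (p : ℝ) ≤ (2 : ℝ) ^ ((n : ℝ) ^ (0.1 : ℝ)) →
        (Set.ncard {Q : Matrix (Fin n) (Fin n) ℕ | isRowReg n Q ∧
            ∃ v : Fin n → ZMod p, v ≠ 0 ∧ (∀ i, ∑ j, (Q i j : ZMod p) * v j = 0) ∧
              (n : ℝ) - (n : ℝ) ^ (0.8 : ℝ) ≤ levelMax p n v} : ℝ) ≤
          C * (2 : ℝ) ^ (-(n : ℝ) / 100) *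
            (Set.ncard {Q : Matrix (Fin n) (Fin n) ℕ | isRowReg n Q} : ℝ) := by
  obtain ⟨N, hN⟩ :=
    eventually_atTop.1 (tendsto_natCast_atTop_atTop.eventually eventually_exponent_bounds)
  refine ⟨1, one_pos, N, fun n hn _ p hp hPp hpP => ?_⟩
  obtain ⟨hnP, hkn, hexp⟩ := hN n hn
  have : Fact p.Prime := ⟨hp⟩
  set k := ⌊(n : ℝ) ^ (0.8 : ℝ)⌋₊
  have hk : (k : ℝ) ≤ (n : ℝ) ^ (0.8 : ℝ) := Nat.floor_le (by positivity)
  have hhalf : n / 2 < p := by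
    have : ((n / 2 : ℕ) : ℝ) ≤ n / 2 := Nat.cast_div_le
    exact_mod_cast (by linarith : ((n / 2 : ℕ) : ℝ) < p)
  have hcount :=
    five_pow_mul_ncard_le hhalf (by exact_mod_cast (by linarith : (4 * k + 2 : ℝ) ≤ n))
  have hV : (#(almostConst (Fin n) (ZMod p) k) : ℝ) ≤ 2 ^ ((1 / 4 - 1 / 100) * (n : ℝ)) := by
    refine (card_almostConst_le_pow (by simpa using hpP) (by simpa using hnP) k).trans ?_
    rw [← Real.rpow_natCast, ← Real.rpow_mul (by norm_num)]
    refine Real.rpow_le_rpow_of_exponent_le one_le_two (hexp.trans' ?_)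
    gcongr
    push_cast
    linarith
  rw [ncard_isRowReg, Nat.cast_pow]
  calc _ ≤ (#(almostConst (Fin n) (ZMod p) k) : ℝ) * (4 / 5) ^ n * #(halfRows n) ^ n := by
        refine le_of_mul_le_mul_left ?_ (by positivity : (0 : ℝ) < 5 ^ n)
        calc (5 : ℝ) ^ n * _ ≤ #(almostConst (Fin n) (ZMod p) k) * (4 * #(halfRows n)) ^ n := by
              exact_mod_cast hcount
          _ = _ := by rw [mul_pow, div_pow]; field_simp
    _ ≤ 2 ^ ((1 / 4 - 1 / 100) * (n : ℝ)) * 2 ^ (-(n : ℝ) / 4) * #(halfRows n) ^ n := by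
      gcongr
      exact four_fifths_pow_le n
    _ = 1 * 2 ^ (-(n : ℝ) / 100) * #(halfRows n) ^ n := by
      rw [← Real.rpow_add two_pos]; ring_nf
end

section
/- Let n be an even positive integer, let A and B be two disjoint subsets of [n], and let M be a uniformly random perfect matching of the complete graph K_n on vertex set [n]. Then the probability that the number of edges of M with one endpoint in A and the other endpoint in B is at most |A||B|/(8n) is at most exp(−|A||B|/(32n)). -/
open scoped BigOperators

/-- Perfect matchings of the complete graph on `[n]`, encoded as fixed-point-free involutions:
the edges of the matching are the pairs `{i, f i}`. -/
def perfectMatchings (n : ℕ) : Set (Equiv.Perm (Fin n)) :=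
  {f | ∀ i, f (f i) = i ∧ f i ≠ i}

/-!
Chernoff's bound with base `2`: if `X f` counts the `A`–`B` edges of `f`, then
`#{X ≤ T} ≤ 2 ^ T ∑_f 2⁻¹ ^ X f`, and `2 ^ T e^{-T} ≤ e^{-T/4}` as `log 2 ≤ 3/4`, so it suffices
to show `∑_f 2⁻¹ ^ X f ≤ e^{-|A||B|/(8n)} · #matchings`. This goes by induction on the vertex
set `V`, assuming `|A| ≤ |B|` (`X` is symmetric): a matching of `V` is a partner `u` of a fixed
`v ∈ A` together with a matching of `V ∖ {v, u}`. Exactly `|B|` of the `|V| - 1 < n` choices of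
`u` halve the weight, a factor `1 - |B|/(2n) ≤ e^{-|B|/(2n)}` on average, while passing to
`A ∖ {v, u}` and `B ∖ {u}` lowers the numerator `|A||B|` of the exponent by at most `4|B|`.
-/

open Finset Equiv Real

variable {α : Type*} [DecidableEq α]

lemma sum_ite_mem_eq_card_sub {W B : Finset α} (hBW : B ⊆ W) :
    ∑ u ∈ W, (if u ∈ B then (2 : ℝ)⁻¹ else 1) = #W - #B / 2 := by
  have : ∀ u, (if u ∈ B then (2 : ℝ)⁻¹ else 1) = 1 - (if u ∈ B then 2⁻¹ else 0) := by
    intro u; split_ifs <;> norm_num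
  simp only [this, sum_sub_distrib, sum_const, nsmul_eq_mul, mul_one, sum_ite_mem,
    inter_eq_right.2 hBW]
  ring

lemma sub_half_mul_exp_le {m b n : ℝ} (hm : 0 ≤ m) (hb : 0 ≤ b) (hmn : m ≤ n) (hn : 0 < n) :
    (m - b / 2) * exp (b / (2 * n)) ≤ m := by
  have h1 : m - b / 2 ≤ m * exp (-(b / (2 * n))) := calc
    m - b / 2 ≤ m * (-(b / (2 * n)) + 1) := by
      have h : m / n * (b / 2) ≤ b / 2 :=
        mul_le_of_le_one_left (by positivity) ((div_le_one hn).2 hmn)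
      linarith [show m * (b / (2 * n)) = m / n * (b / 2) by ring]
    _ ≤ m * exp (-(b / (2 * n))) := by gcongr; exact add_one_le_exp _
  calc (m - b / 2) * exp (b / (2 * n)) ≤ m * exp (-(b / (2 * n))) * exp (b / (2 * n)) := by
        gcongr
    _ = m := by rw [mul_assoc, ← exp_add]; simp

lemma exp_neg_mul_div_le {a b x y n : ℝ} (hn : 0 < n) (hab : a ≤ b) (hxa : x ≤ a) (hx : 0 ≤ x)
    (hax : a ≤ x + 2) (hby : b ≤ y + 1) :
    exp (-(x * y) / (8 * n)) ≤ exp (b / (2 * n)) * exp (-(a * b) / (8 * n)) := by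
  have key : a * b ≤ x * y + 4 * b := by
    nlinarith [mul_le_mul_of_nonneg_right hax (hx.trans (hxa.trans hab)),
      mul_le_mul_of_nonneg_left hby hx]
  rw [← exp_add, exp_le_exp, show b / (2 * n) = 4 * b / (8 * n) by field_simp; ring,
    ← add_div, div_le_div_iff_of_pos_right (by positivity)]
  linarith

lemma card_filter_le_two_rpow_mul_sum {ι : Type*} (S : Finset ι) (X : ι → ℕ) (T : ℝ) :
    (#{x ∈ S | (X x : ℝ) ≤ T} : ℝ) ≤ 2 ^ T * ∑ x ∈ S, (2 : ℝ)⁻¹ ^ X x := by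
  rw [mul_sum, card_eq_sum_ones, Nat.cast_sum, Nat.cast_one]
  calc ∑ x ∈ S with (X x : ℝ) ≤ T, (1 : ℝ)
      ≤ ∑ x ∈ S with (X x : ℝ) ≤ T, 2 ^ T * (2 : ℝ)⁻¹ ^ X x := by
        refine sum_le_sum fun x hx => ?_
        rw [inv_pow, ← div_eq_mul_inv, one_le_div (by positivity), ← rpow_natCast]
        exact rpow_le_rpow_of_exponent_le one_le_two (mem_filter.1 hx).2
    _ ≤ ∑ x ∈ S, 2 ^ T * (2 : ℝ)⁻¹ ^ X x :=
        sum_le_sum_of_subset_of_nonneg (filter_subset _ _) fun _ _ _ => by positivity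

lemma two_rpow_mul_exp_neg_le {T : ℝ} (hT : 0 ≤ T) : 2 ^ T * exp (-T) ≤ exp (-T / 4) := by
  rw [rpow_def_of_pos two_pos, ← exp_add, exp_le_exp]
  nlinarith [log_two_lt_d9]

def crossCount (A B : Finset α) (f : Perm α) : ℕ :=
  #{i ∈ A | f i ∈ B}

lemma ncard_setOf_mem_and_apply_mem (A B : Finset α) (f : Perm α) :
    {i | i ∈ A ∧ f i ∈ B}.ncard = crossCount A B f := by
  rw [crossCount, ← Set.ncard_coe_finset]
  simp

section
variable {A B : Finset α} {f g : Perm α} {u v : α}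

lemma crossCount_comm (hf : f * f = 1) : crossCount A B f = crossCount B A f := by
  have hfi : ∀ i, f (f i) = i := fun i => by rw [← Perm.mul_apply, hf, Perm.one_apply]
  exact card_nbij' f f (fun i hi => by simp_all) (fun i hi => by simp_all) (fun i _ => hfi i)
    (fun i _ => hfi i)

lemma crossCount_swap_mul (hvA : v ∈ A) (hvB : v ∉ B) (hgv : g v = v) (hgu : g u = u) :
    crossCount A B (swap v u * g) =
      crossCount ((A.erase v).erase u) (B.erase u) g + if u ∈ B then 1 else 0 := by
  simp only [crossCount, card_filter]
  rw [← add_sum_erase A _ hvA, add_comm, ← sum_erase (A.erase v) (a := u) (by simp [hgu, hvB])]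
  congr 1
  · refine sum_congr rfl fun i hi => ?_
    have hgi : g i ≠ u ∧ g i ≠ v := by
      simp only [mem_erase] at hi
      exact ⟨fun h => hi.1 (g.injective (h.trans hgu.symm)),
        fun h => hi.2.1 (g.injective (h.trans hgv.symm))⟩
    simp [swap_apply_of_ne_of_ne hgi.2 hgi.1, hgi.1]
  · simp [hgv]

end

variable [Fintype α]

def perfectMatchingsOn (V : Finset α) : Finset (Perm α) :=
  {f | f * f = 1 ∧ f.support = V}

section
variable {V : Finset α} {f g : Perm α} {u v : α}

@[simp]
lemma mem_perfectMatchingsOn : f ∈ perfectMatchingsOn V ↔ f * f = 1 ∧ f.support = V := by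
  simp [perfectMatchingsOn]

lemma apply_eq_self_of_mem_perfectMatchingsOn (hf : f ∈ perfectMatchingsOn V) (hu : u ∉ V) :
    f u = u := by
  rwa [← Perm.notMem_support, (mem_perfectMatchingsOn.1 hf).2]

lemma swap_mul_mem_perfectMatchingsOn (hv : v ∈ V) (hu : u ∈ V.erase v)
    (hg : g ∈ perfectMatchingsOn ((V.erase v).erase u)) : swap v u * g ∈ perfectMatchingsOn V := by
  obtain ⟨hgg, hsupp⟩ := mem_perfectMatchingsOn.1 hg
  have hvu : v ≠ u := (ne_of_mem_erase hu).symm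
  have hdisj : (swap v u).Disjoint g := by
    rw [Perm.disjoint_iff_disjoint_support, Perm.support_swap hvu, hsupp]
    simp [Finset.disjoint_left]
  refine mem_perfectMatchingsOn.2 ⟨?_, ?_⟩
  · rw [hdisj.commute.symm.mul_mul_mul_comm, swap_mul_self, hgg, one_mul]
  · rw [hdisj.support_mul, Perm.support_swap hvu, hsupp, insert_union, singleton_union,
      insert_erase hu, insert_erase hv]

lemma swap_mul_mem_perfectMatchingsOn_erase (hf : f ∈ perfectMatchingsOn V) (hv : v ∈ V) :
    f v ∈ V.erase v ∧ swap v (f v) * f ∈ perfectMatchingsOn ((V.erase v).erase (f v)) := by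
  obtain ⟨hff, rfl⟩ := mem_perfectMatchingsOn.1 hf
  have hfv : f (f v) = v := by rw [← Perm.mul_apply, hff, Perm.one_apply]
  have hcomm : Commute (swap v (f v)) f := by
    have hconj : f * swap v (f v) * f⁻¹ = swap v (f v) := by
      rw [← swap_apply_apply, hfv, swap_comm]
    exact (mul_inv_eq_iff_eq_mul.1 hconj).symm
  refine ⟨mem_erase.2 ⟨Perm.mem_support.1 hv, Perm.apply_mem_support.2 hv⟩,
    mem_perfectMatchingsOn.2 ⟨?_, ?_⟩⟩
  · rw [hcomm.symm.mul_mul_mul_comm, swap_mul_self, hff, one_mul]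
  · ext i
    simp only [Perm.mem_support, mem_erase, Perm.mul_apply, swap_apply_def]
    grind

lemma sum_perfectMatchingsOn_eq_sum_erase {M : Type*} [AddCommMonoid M] (hv : v ∈ V)
    (F : Perm α → M) :
    ∑ f ∈ perfectMatchingsOn V, F f =
      ∑ u ∈ V.erase v, ∑ g ∈ perfectMatchingsOn ((V.erase v).erase u), F (swap v u * g) := by
  rw [sum_sigma']
  refine sum_nbij' (fun f => ⟨f v, swap v (f v) * f⟩) (fun p => swap v p.1 * p.2)
    (fun f hf => mem_sigma.2 (swap_mul_mem_perfectMatchingsOn_erase hf hv))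
    (fun p hp => swap_mul_mem_perfectMatchingsOn hv (mem_sigma.1 hp).1 (mem_sigma.1 hp).2)
    (fun f _ => by simp [← mul_assoc]) (fun ⟨u, g⟩ hp => ?_) (fun f _ => by simp [← mul_assoc])
  obtain ⟨hu, hg⟩ := mem_sigma.1 hp
  have hgv : g v = v := apply_eq_self_of_mem_perfectMatchingsOn hg (by simp)
  simp [hgv, ← mul_assoc]

lemma conj_mem_perfectMatchingsOn (σ : Perm α) (hf : f ∈ perfectMatchingsOn V) :
    σ * f * σ⁻¹ ∈ perfectMatchingsOn (V.map σ.toEmbedding) := by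
  obtain ⟨hff, rfl⟩ := mem_perfectMatchingsOn.1 hf
  refine mem_perfectMatchingsOn.2 ⟨?_, Perm.support_conj⟩
  simp [mul_assoc, ← mul_assoc f f, hff]

lemma card_perfectMatchingsOn_map (σ : Perm α) (V : Finset α) :
    #(perfectMatchingsOn (V.map σ.toEmbedding)) = #(perfectMatchingsOn V) := by
  refine card_nbij' (fun f => σ⁻¹ * f * σ⁻¹⁻¹) (fun f => σ * f * σ⁻¹) (fun f hf => ?_)
    (fun f hf => conj_mem_perfectMatchingsOn σ hf) (fun f _ => by simp [mul_assoc])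
    (fun f _ => by simp [mul_assoc])
  simpa [map_map] using conj_mem_perfectMatchingsOn σ⁻¹ hf

lemma card_perfectMatchingsOn_congr {W : Finset α} (h : #V = #W) :
    #(perfectMatchingsOn V) = #(perfectMatchingsOn W) := by
  obtain ⟨σ, rfl⟩ := Perm.exists_map_finset_eq V W h
  exact (card_perfectMatchingsOn_map σ V).symm

lemma card_perfectMatchingsOn_eq_mul (hv : v ∈ V) (hu : u ∈ V.erase v) :
    #(perfectMatchingsOn V) = #(V.erase v) * #(perfectMatchingsOn ((V.erase v).erase u)) := by
  rw [card_eq_sum_ones, sum_perfectMatchingsOn_eq_sum_erase hv, ← smul_eq_mul, ← sum_const]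
  refine sum_congr rfl fun u' hu' => ?_
  rw [← card_eq_sum_ones]
  exact card_perfectMatchingsOn_congr (by rw [card_erase_of_mem hu', card_erase_of_mem hu])

lemma sum_inv_two_pow_crossCount_swap_mul_le {W A B : Finset α} (hvA : v ∈ A) (hvB : v ∉ B)
    (hvW : v ∉ W) (huW : u ∉ W) (hle : #A ≤ #B)
    (ih : ∑ g ∈ perfectMatchingsOn W, (2 : ℝ)⁻¹ ^ crossCount ((A.erase v).erase u) (B.erase u) g ≤
      exp (-(#((A.erase v).erase u) * #(B.erase u) : ℝ) / (8 * Fintype.card α)) *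
        #(perfectMatchingsOn W)) :
    ∑ g ∈ perfectMatchingsOn W, (2 : ℝ)⁻¹ ^ crossCount A B (swap v u * g) ≤
      (if u ∈ B then 2⁻¹ else 1) * (exp (#B / (2 * Fintype.card α)) *
        exp (-(#A * #B : ℝ) / (8 * Fintype.card α)) * #(perfectMatchingsOn W)) := by
  have hn : (0 : ℝ) < Fintype.card α := by exact_mod_cast Fintype.card_pos_iff.2 ⟨v⟩
  have hweight (g : Perm α) (hg : g ∈ perfectMatchingsOn W) :
      (2 : ℝ)⁻¹ ^ crossCount A B (swap v u * g) =
        (if u ∈ B then 2⁻¹ else 1) * 2⁻¹ ^ crossCount ((A.erase v).erase u) (B.erase u) g := by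
    rw [crossCount_swap_mul hvA hvB (apply_eq_self_of_mem_perfectMatchingsOn hg hvW)
      (apply_eq_self_of_mem_perfectMatchingsOn hg huW), pow_add]
    split_ifs <;> simp [mul_comm]
  have hA : #A ≤ #((A.erase v).erase u) + 2 := by
    have := pred_card_le_card_erase (s := A) (a := v)
    have := pred_card_le_card_erase (s := A.erase v) (a := u)
    omega
  have hB : #B ≤ #(B.erase u) + 1 := by
    have := pred_card_le_card_erase (s := B) (a := u)
    omega
  rw [sum_congr rfl hweight, ← mul_sum]
  gcongr
  refine ih.trans ?_
  gcongr
  exact exp_neg_mul_div_le hn (by exact_mod_cast hle)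
    (by exact_mod_cast card_le_card ((erase_subset _ _).trans (erase_subset _ _)))
    (by positivity) (by exact_mod_cast hA) (by exact_mod_cast hB)

theorem sum_inv_two_pow_crossCount_le (V : Finset α) {A B : Finset α} (hAV : A ⊆ V) (hBV : B ⊆ V)
    (hAB : Disjoint A B) :
    ∑ f ∈ perfectMatchingsOn V, (2 : ℝ)⁻¹ ^ crossCount A B f ≤
      exp (-(#A * #B : ℝ) / (8 * Fintype.card α)) * #(perfectMatchingsOn V) := by
  induction V using Finset.strongInduction generalizing A B with
  | H V ih =>
  wlog hle : #A ≤ #B generalizing A B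
  · have hsymm : ∀ f ∈ perfectMatchingsOn V, crossCount A B f = crossCount B A f :=
      fun f hf => crossCount_comm (mem_perfectMatchingsOn.1 hf).1
    rw [sum_congr rfl fun f hf => by rw [hsymm f hf], mul_comm (#A : ℝ)]
    exact this hBV hAV hAB.symm (le_of_not_ge hle)
  obtain rfl | ⟨v, hvA⟩ := A.eq_empty_or_nonempty
  · simp [crossCount]
  have hvV : v ∈ V := hAV hvA
  have hvB : v ∉ B := disjoint_left.1 hAB hvA
  rw [sum_perfectMatchingsOn_eq_sum_erase hvV]
  set W := V.erase v
  obtain hW | ⟨u₀, hu₀⟩ := W.eq_empty_or_nonempty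
  · rw [hW, sum_empty]
    positivity
  set n : ℝ := (Fintype.card α : ℝ)
  set E := exp (-(#A * #B : ℝ) / (8 * n))
  have hn : 0 < n := Nat.cast_pos.2 (Fintype.card_pos_iff.2 ⟨v⟩)
  set N := #(perfectMatchingsOn (W.erase u₀))
  have hN (u : α) (hu : u ∈ W) : #(perfectMatchingsOn (W.erase u)) = N :=
    card_perfectMatchingsOn_congr (by rw [card_erase_of_mem hu, card_erase_of_mem hu₀])
  have hstep (u : α) (hu : u ∈ W) :
      ∑ g ∈ perfectMatchingsOn (W.erase u), (2 : ℝ)⁻¹ ^ crossCount A B (swap v u * g) ≤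
        (if u ∈ B then 2⁻¹ else 1) * (exp (#B / (2 * n)) * E * N) := by
    rw [← hN u hu]
    exact sum_inv_two_pow_crossCount_swap_mul_le hvA hvB (by simp [W]) (by simp) hle
      (ih _ ((erase_ssubset hu).trans_le (erase_subset v V))
        (erase_subset_erase u (erase_subset_erase v hAV))
        (erase_subset_erase u (subset_erase.2 ⟨hBV, hvB⟩))
        (hAB.mono ((erase_subset _ _).trans (erase_subset _ _)) (erase_subset _ _)))
  have hcard : #(perfectMatchingsOn V) = #W * N := card_perfectMatchingsOn_eq_mul hvV hu₀
  calc _ ≤ ∑ u ∈ W, (if u ∈ B then 2⁻¹ else 1) * (exp (#B / (2 * n)) * E * N) :=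
        sum_le_sum hstep
    _ = (#W - #B / 2) * exp (#B / (2 * n)) * (E * N) := by
        rw [← sum_mul, sum_ite_mem_eq_card_sub (subset_erase.2 ⟨hBV, hvB⟩)]
        ring
    _ ≤ #W * (E * N) := by
        gcongr
        exact sub_half_mul_exp_le (by positivity) (by positivity)
          (Nat.cast_le.2 (card_le_univ W)) hn
    _ = _ := by rw [hcard]; push_cast; ring

end

theorem card_filter_crossCount_le {A B : Finset α} (hAB : Disjoint A B) :
    (#{f ∈ perfectMatchingsOn univ |
        (crossCount A B f : ℝ) ≤ #A * #B / (8 * Fintype.card α)} : ℝ) ≤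
      exp (-(#A * #B : ℝ) / (32 * Fintype.card α)) * #(perfectMatchingsOn (univ : Finset α)) := by
  set T : ℝ := #A * #B / (8 * Fintype.card α)
  calc _ ≤ 2 ^ T * ∑ f ∈ perfectMatchingsOn univ, (2 : ℝ)⁻¹ ^ crossCount A B f :=
        card_filter_le_two_rpow_mul_sum _ _ T
    _ ≤ 2 ^ T * (exp (-T) * #(perfectMatchingsOn (univ : Finset α))) := by
        gcongr
        simpa [neg_div, T] using
          sum_inv_two_pow_crossCount_le univ (subset_univ A) (subset_univ B) hAB
    _ ≤ _ := by
        rw [← mul_assoc]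
        gcongr
        refine (two_rpow_mul_exp_neg_le (by positivity)).trans_eq ?_
        congr 1
        dsimp only [T]
        ring

lemma perfectMatchings_eq_perfectMatchingsOn_univ (n : ℕ) :
    perfectMatchings n = perfectMatchingsOn (univ : Finset (Fin n)) := by
  ext f
  simp [perfectMatchings, Perm.ext_iff, eq_univ_iff_forall, forall_and]

/-- Let `n` be an even positive integer, `A, B ⊆ [n]` disjoint, and let `M` be a uniformly random
perfect matching of `K_n`. Then the probability that the number of edges of `M` with one endpoint
in `A` and the other in `B` is at most `|A||B|/(8n)` is at most `exp(−|A||B|/(32n))` (stated as a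
counting bound; since `A` and `B` are disjoint, each such edge `{i, f i}` is counted once by the
condition `i ∈ A ∧ f i ∈ B`). -/
theorem matching_edges_between :
    ∀ n : ℕ, 0 < n → Even n → ∀ A B : Finset (Fin n), Disjoint A B →
      (Set.ncard {f ∈ perfectMatchings n |
          (Set.ncard {i : Fin n | i ∈ A ∧ f i ∈ B} : ℝ) ≤
            (A.card : ℝ) * B.card / (8 * n)} : ℝ) ≤
        Real.exp (-((A.card : ℝ) * B.card) / (32 * n)) *
          (Set.ncard (perfectMatchings n) : ℝ) := by
  intro n _ _ A B hAB
  have h := card_filter_crossCount_le hAB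
  rw [← Set.ncard_coe_finset, ← Set.ncard_coe_finset (perfectMatchingsOn univ), coe_filter] at h
  simp_rw [← ncard_setOf_mem_and_apply_mem] at h
  rw [perfectMatchings_eq_perfectMatchingsOn_univ]
  simpa using h
end

section
/- Let n be an even positive integer, let M be a uniformly random perfect matching of the complete graph K_n on vertex set [n], and let M' be any fixed perfect matching of K_n. Then the probability that the multigraph M ∪ M' (on vertex set [n], with edge set the union of the two matchings) has more than 2√n connected components is at most 2^{−√n/2}. -/
open scoped BigOperators

open Finset

set_option linter.unusedSectionVars false
set_option linter.unnecessarySeqFocus false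

section PM
variable {α β : Type*} [Fintype α] [DecidableEq α] [Fintype β] [DecidableEq β]

def pmF (α : Type*) [Fintype α] [DecidableEq α] : Finset (Equiv.Perm α) :=
  Finset.univ.filter (fun f => ∀ i, f (f i) = i ∧ f i ≠ i)

def pcard (k : ℕ) : ℕ := (pmF (Fin k)).card

def dfac : ℕ → ℕ
  | 0 => 1
  | (j+1) => (2*j+1) * dfac j

lemma mem_pmF {f : Equiv.Perm α} : f ∈ pmF α ↔ ∀ i, f (f i) = i ∧ f i ≠ i := by
  simp [pmF]

lemma pmF_card_congr (e : α ≃ β) : (pmF α).card = (pmF β).card := by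
  apply Finset.card_nbij' (fun f => e.permCongr f) (fun f => e.symm.permCongr f)
  · intro f hf
    simp only [Finset.mem_coe] at hf ⊢
    rw [mem_pmF] at hf ⊢
    intro i
    constructor
    · simp [Equiv.permCongr_apply, (hf _).1]
    · simp only [Equiv.permCongr_apply, ne_eq]
      intro h
      exact (hf (e.symm i)).2 (by simpa using congrArg e.symm h)
  · intro f hf
    simp only [Finset.mem_coe] at hf ⊢
    rw [mem_pmF] at hf ⊢
    intro i
    constructor
    · simp [Equiv.permCongr_apply, (hf _).1]
    · simp only [Equiv.permCongr_apply, ne_eq]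
      intro h
      exact (hf (e i)).2 (by simpa using congrArg e h)
  · intro f _; ext x; simp
  · intro f _; ext x; simp

lemma pmF_card_eq_pcard : (pmF α).card = pcard (Fintype.card α) :=
  pmF_card_congr (Fintype.equivFinOfCardEq rfl)

lemma pm_iff_closed {p : α → Prop} {f : Equiv.Perm α}
    (hf : ∀ i, f (f i) = i ∧ f i ≠ i) (hc : ∀ x, p x → p (f x)) :
    ∀ x, p x ↔ p (f x) := by
  intro x
  refine ⟨hc x, fun h => ?_⟩
  have := hc (f x) h
  rwa [(hf x).1] at this

lemma pm_iff_closed' {p : α → Prop} {f : Equiv.Perm α}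
    (hf : ∀ i, f (f i) = i ∧ f i ≠ i) (hc : ∀ x, p x → p (f x)) :
    ∀ x, ¬ p x ↔ ¬ p (f x) := fun x => not_congr (pm_iff_closed hf hc x)

lemma subtypePerm_mem_pmF {p : α → Prop} [DecidablePred p] {f : Equiv.Perm α}
    (hf : ∀ i, f (f i) = i ∧ f i ≠ i) (h : ∀ x, p x ↔ p (f x)) :
    f.subtypePerm (fun x => (h x).symm) ∈ pmF {x // p x} := by
  rw [mem_pmF]
  rintro ⟨i, hi⟩
  constructor
  · ext
    simp [Equiv.Perm.subtypePerm_apply, (hf i).1]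
  · intro hco
    exact (hf i).2 (congrArg Subtype.val hco)

lemma card_pm_split (p : α → Prop) [DecidablePred p] :
    ((pmF α).filter (fun f => ∀ x, p x → p (f x))).card
      = pcard (Fintype.card {x // p x}) * pcard (Fintype.card {x // ¬ p x}) := by
  rw [← pmF_card_eq_pcard, ← pmF_card_eq_pcard, ← Finset.card_product]
  refine Finset.card_bij'
    (fun f hf =>
      (f.subtypePerm (fun x => (pm_iff_closed (mem_pmF.mp (mem_filter.mp hf).1) (mem_filter.mp hf).2 x).symm),
       f.subtypePerm (fun x => (pm_iff_closed' (mem_pmF.mp (mem_filter.mp hf).1) (mem_filter.mp hf).2 x).symm)))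
    (fun fp _ => Equiv.Perm.subtypeCongr fp.1 fp.2) ?_ ?_ ?_ ?_
  · -- membership forward
    intro f hf
    rw [Finset.mem_product]
    obtain ⟨hf1, hf2⟩ := mem_filter.mp hf
    exact ⟨subtypePerm_mem_pmF (mem_pmF.mp hf1) (pm_iff_closed (mem_pmF.mp hf1) hf2),
           subtypePerm_mem_pmF (mem_pmF.mp hf1) (pm_iff_closed' (mem_pmF.mp hf1) hf2)⟩
  · -- membership backward
    rintro ⟨f₁, f₂⟩ hfp
    rw [Finset.mem_product] at hfp
    have h1 := mem_pmF.mp hfp.1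
    have h2 := mem_pmF.mp hfp.2
    have happ : ∀ x (h : p x), Equiv.Perm.subtypeCongr f₁ f₂ x = ↑(f₁ ⟨x, h⟩) :=
      fun x h => Equiv.Perm.subtypeCongr.left_apply f₁ f₂ h
    have happ' : ∀ x (h : ¬ p x), Equiv.Perm.subtypeCongr f₁ f₂ x = ↑(f₂ ⟨x, h⟩) :=
      fun x h => Equiv.Perm.subtypeCongr.right_apply f₁ f₂ h
    rw [mem_filter, mem_pmF]
    constructor
    · intro i
      by_cases h : p i
      · rw [happ i h, happ _ (f₁ ⟨i, h⟩).2, Subtype.coe_eta]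
        exact ⟨congrArg Subtype.val ((h1 ⟨i, h⟩).1),
               fun hco => (h1 ⟨i, h⟩).2 (Subtype.ext hco)⟩
      · rw [happ' i h, happ' _ (f₂ ⟨i, h⟩).2, Subtype.coe_eta]
        exact ⟨congrArg Subtype.val ((h2 ⟨i, h⟩).1),
               fun hco => (h2 ⟨i, h⟩).2 (Subtype.ext hco)⟩
    · intro x hx
      rw [happ x hx]
      exact (f₁ ⟨x, hx⟩).2
  · -- left inverse
    intro f hf
    ext x
    by_cases h : p x
    · rw [Equiv.Perm.subtypeCongr.left_apply _ _ h]; rfl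
    · rw [Equiv.Perm.subtypeCongr.right_apply _ _ h]; rfl
  · -- right inverse
    rintro ⟨f₁, f₂⟩ hfp
    have happ : ∀ x (h : p x), Equiv.Perm.subtypeCongr f₁ f₂ x = ↑(f₁ ⟨x, h⟩) :=
      fun x h => Equiv.Perm.subtypeCongr.left_apply f₁ f₂ h
    have happ' : ∀ x (h : ¬ p x), Equiv.Perm.subtypeCongr f₁ f₂ x = ↑(f₂ ⟨x, h⟩) :=
      fun x h => Equiv.Perm.subtypeCongr.right_apply f₁ f₂ h
    refine Prod.ext ?_ ?_
    · ext x
      show ((Equiv.Perm.subtypeCongr f₁ f₂) (x : α) : α) = _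
      rw [happ x x.2, Subtype.coe_eta]
    · ext x
      show ((Equiv.Perm.subtypeCongr f₁ f₂) (x : α) : α) = _
      rw [happ' x x.2, Subtype.coe_eta]

lemma pcard_zero : pcard 0 = 1 := by decide

lemma pcard_two : pcard 2 = 1 := by decide

lemma pcard_succ_succ (k : ℕ) : pcard (k + 2) = (k + 1) * pcard k := by
  have hcard : (pmF (Fin (k+2))).card
      = ∑ v ∈ (Finset.univ.erase (0 : Fin (k+2))), ((pmF (Fin (k+2))).filter (fun f => f 0 = v)).card := by
    apply Finset.card_eq_sum_card_fiberwise
    intro f hf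
    exact Finset.mem_erase.mpr ⟨(mem_pmF.mp hf 0).2, Finset.mem_univ _⟩
  have hfib : ∀ v ∈ (Finset.univ.erase (0 : Fin (k+2))),
      ((pmF (Fin (k+2))).filter (fun f => f 0 = v)).card = pcard k := by
    intro v hv
    have hv0 : v ≠ 0 := (Finset.mem_erase.mp hv).1
    have hset : (pmF (Fin (k+2))).filter (fun f => f 0 = v)
        = (pmF (Fin (k+2))).filter (fun f => ∀ x, (x = 0 ∨ x = v) → (f x = 0 ∨ f x = v)) := by
      apply Finset.filter_congr
      intro f hf
      have hinv := mem_pmF.mp hf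
      constructor
      · intro h0 x hx
        rcases hx with rfl | rfl
        · exact Or.inr h0
        · exact Or.inl (by rw [← h0, (hinv 0).1])
      · intro h
        rcases h 0 (Or.inl rfl) with h' | h'
        · exact absurd h' (hinv 0).2
        · exact h'
    have hsplit := card_pm_split (α := Fin (k+2)) (fun x => x = 0 ∨ x = v)
    rw [Finset.filter_congr_decidable] at hsplit
    rw [hset, Finset.filter_congr_decidable, hsplit]
    have h2 : Fintype.card {x : Fin (k+2) // x = 0 ∨ x = v} = 2 := by
      rw [Fintype.card_subtype]
      have : Finset.univ.filter (fun x : Fin (k+2) => x = 0 ∨ x = v) = {0, v} := by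
        ext x; simp [Finset.mem_insert]
      rw [this]
      rw [Finset.card_insert_of_notMem (by simp [Ne.symm hv0]), Finset.card_singleton]
    have hk : Fintype.card {x : Fin (k+2) // ¬ (x = 0 ∨ x = v)} = k := by
      rw [Fintype.card_subtype_compl, h2, Fintype.card_fin]
      omega
    rw [h2, hk, pcard_two, one_mul]
  rw [show pcard (k+2) = (pmF (Fin (k+2))).card from rfl, hcard,
    Finset.sum_congr rfl hfib, Finset.sum_const, smul_eq_mul]
  congr 1
  rw [Finset.card_erase_of_mem (Finset.mem_univ _), Finset.card_univ, Fintype.card_fin]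
  omega

lemma pcard_even (j : ℕ) : pcard (2 * j) = dfac j := by
  induction j with
  | zero => simpa [dfac] using pcard_zero
  | succ j ih =>
    have : 2 * (j + 1) = 2 * j + 2 := by ring
    rw [this, pcard_succ_succ, ih, dfac]

end PM

lemma dfac_identity (m : ℕ) :
    ∑ j ∈ range (m+1), (m.choose j) * (dfac j * dfac (m - j)) = 2^m * m.factorial := by
  induction m with
  | zero => simp [dfac]
  | succ m ih =>
    have step1 : ∑ j ∈ range (m+2), ((m+1).choose j) * (dfac j * dfac (m+1-j))
        = ∑ j ∈ range (m+1), ((m+1).choose (j+1)) * (dfac (j+1) * dfac (m-j))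
          + dfac (m+1) := by
      rw [Finset.sum_range_succ' (fun j => ((m+1).choose j) * (dfac j * dfac (m+1-j))) (m+1)]
      congr 1
      · apply Finset.sum_congr rfl
        intro j hj
        rw [mem_range] at hj
        have e : m + 1 - (j + 1) = m - j := by omega
        rw [e]
      · show ((m+1).choose 0) * (dfac 0 * dfac (m+1-0)) = dfac (m+1)
        rw [Nat.choose_zero_right, Nat.sub_zero, one_mul, show dfac 0 = 1 from rfl, one_mul]
    have step2 : ∑ j ∈ range (m+1), ((m+1).choose (j+1)) * (dfac (j+1) * dfac (m-j))
        = ∑ j ∈ range (m+1), (m.choose j) * (dfac (j+1) * dfac (m-j))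
          + ∑ j ∈ range (m+1), (m.choose (j+1)) * (dfac (j+1) * dfac (m-j)) := by
      rw [← Finset.sum_add_distrib]
      apply Finset.sum_congr rfl
      intro j _
      rw [Nat.choose_succ_succ, Nat.add_mul]
    have step3 : ∑ j ∈ range (m+1), (m.choose (j+1)) * (dfac (j+1) * dfac (m-j)) + dfac (m+1)
        = ∑ j ∈ range (m+1), (m.choose j) * (dfac j * dfac (m+1-j)) := by
      rw [Finset.sum_range_succ' (fun j => (m.choose j) * (dfac j * dfac (m+1-j))) m]
      rw [Finset.sum_range_succ (fun j => (m.choose (j+1)) * (dfac (j+1) * dfac (m-j))) m]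
      rw [Nat.choose_succ_self, zero_mul, add_zero]
      congr 1
      · apply Finset.sum_congr rfl
        intro j hj
        rw [mem_range] at hj
        have e : m + 1 - (j + 1) = m - j := by omega
        rw [e]
      · show dfac (m+1) = (m.choose 0) * (dfac 0 * dfac (m+1-0))
        rw [Nat.choose_zero_right, Nat.sub_zero, one_mul, show dfac 0 = 1 from rfl, one_mul]
    have step4 : ∑ j ∈ range (m+1), (m.choose j) * (dfac (j+1) * dfac (m-j))
          + ∑ j ∈ range (m+1), (m.choose j) * (dfac j * dfac (m+1-j))
        = (2*m+2) * ∑ j ∈ range (m+1), (m.choose j) * (dfac j * dfac (m-j)) := by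
      rw [← Finset.sum_add_distrib, Finset.mul_sum]
      apply Finset.sum_congr rfl
      intro j hj
      rw [mem_range] at hj
      have hj' : j ≤ m := by omega
      have e1 : dfac (j+1) = (2*j+1) * dfac j := rfl
      have e2 : m + 1 - j = (m - j) + 1 := by omega
      rw [e1, e2]
      show (m.choose j) * ((2*j+1) * dfac j * dfac (m-j))
          + (m.choose j) * (dfac j * ((2*(m-j)+1) * dfac (m-j)))
        = (2*m+2) * ((m.choose j) * (dfac j * dfac (m-j)))
      have e3 : (2*j+1) + (2*(m-j)+1) = 2*m+2 := by omega
      rw [← e3]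
      ring
    calc ∑ j ∈ range (m+1+1), ((m+1).choose j) * (dfac j * dfac (m+1-j))
        = ∑ j ∈ range (m+1), (m.choose j) * (dfac (j+1) * dfac (m-j))
          + ∑ j ∈ range (m+1), (m.choose j) * (dfac j * dfac (m+1-j)) := by
          rw [step1, step2]
          omega
      _ = (2*m+2) * (2^m * m.factorial) := by rw [step4, ih]
      _ = 2^(m+1) * (m+1).factorial := by
          rw [Nat.factorial_succ]
          ring

lemma pm_sq_bound (m : ℕ) : (2^m * m.factorial)^2 ≤ (4*m+1) * (dfac m)^2 := by
  induction m with
  | zero => simp [dfac]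
  | succ m ih =>
    have h1 : (2^(m+1) * (m+1).factorial)^2 = (2^m * m.factorial)^2 * (2*(m+1))^2 := by
      rw [Nat.factorial_succ]
      ring
    have h2 : (dfac (m+1))^2 = (2*m+1)^2 * (dfac m)^2 := by
      show ((2*m+1) * dfac m)^2 = _
      ring
    rw [h1, h2]
    have hpoly : (4*m+1) * (4*(m+1)^2) ≤ (4*(m+1)+1) * (2*m+1)^2 := by nlinarith
    calc (2^m * m.factorial)^2 * (2*(m+1))^2
        ≤ ((4*m+1) * (dfac m)^2) * (2*(m+1))^2 := Nat.mul_le_mul_right _ ih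
      _ = (dfac m)^2 * ((4*m+1) * (4*(m+1)^2)) := by ring
      _ ≤ (dfac m)^2 * ((4*(m+1)+1) * (2*m+1)^2) := Nat.mul_le_mul_left _ hpoly
      _ = (4*(m+1)+1) * ((2*m+1)^2 * (dfac m)^2) := by ring

section comp
variable {n : ℕ} (f g : Equiv.Perm (Fin n))

lemma closed_of_walk {V : Type*} {G : SimpleGraph V} {A : Set V}
    (hA : ∀ {x y}, x ∈ A → G.Adj x y → y ∈ A)
    {u v : V} (w : G.Walk u v) (hu : u ∈ A) : v ∈ A := by
  induction w with
  | nil => exact hu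
  | cons h p ih => exact ih (hA hu h)

lemma two_pow_components (hf : ∀ i, f (f i) = i ∧ f i ≠ i) (hg : ∀ i, g (g i) = i ∧ g i ≠ i) :
    2 ^ (Nat.card (SimpleGraph.fromRel (fun x y : Fin n => f x = y ∨ g x = y)).ConnectedComponent)
      = ((Finset.univ : Finset (Finset (Fin n))).filter
          (fun A => ∀ x ∈ A, f x ∈ A ∧ g x ∈ A)).card := by
  classical
  set G := SimpleGraph.fromRel (fun x y : Fin n => f x = y ∨ g x = y) with hG
  haveI : DecidableRel G.Adj := fun x y =>
    decidable_of_iff _ (SimpleGraph.fromRel_adj _ x y).symm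
  -- adjacency characterization
  have hAdj : ∀ {x y : Fin n}, G.Adj x y → (y = f x ∨ y = g x) := by
    intro x y hxy
    rw [hG, SimpleGraph.fromRel_adj] at hxy
    rcases hxy.2 with (h | h) | (h | h)
    · exact Or.inl h.symm
    · exact Or.inr h.symm
    · exact Or.inl (by rw [← h, (hf y).1])
    · exact Or.inr (by rw [← h, (hg y).1])
  have hAdjf : ∀ x : Fin n, G.Adj x (f x) := fun x => by
    rw [hG, SimpleGraph.fromRel_adj]
    exact ⟨Ne.symm (hf x).2, Or.inl (Or.inl rfl)⟩
  have hAdjg : ∀ x : Fin n, G.Adj x (g x) := fun x => by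
    rw [hG, SimpleGraph.fromRel_adj]
    exact ⟨Ne.symm (hg x).2, Or.inl (Or.inr rfl)⟩
  -- closed set predicate on Set
  have hreach : ∀ {A : Set (Fin n)}, (∀ x ∈ A, f x ∈ A ∧ g x ∈ A) →
      ∀ {x y : Fin n}, x ∈ A → G.Reachable x y → y ∈ A := by
    intro A hA x y hx hr
    obtain ⟨w⟩ := hr
    refine closed_of_walk ?_ w hx
    intro a b ha hab
    rcases hAdj hab with rfl | rfl
    · exact (hA a ha).1
    · exact (hA a ha).2
  -- the equivalence
  let e : Set G.ConnectedComponent ≃ {A : Set (Fin n) // ∀ x ∈ A, f x ∈ A ∧ g x ∈ A} :=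
    { toFun := fun S => ⟨{v | G.connectedComponentMk v ∈ S}, by
        intro x hx
        constructor
        · show G.connectedComponentMk (f x) ∈ S
          rwa [SimpleGraph.ConnectedComponent.sound (hAdjf x).reachable.symm]
        · show G.connectedComponentMk (g x) ∈ S
          rwa [SimpleGraph.ConnectedComponent.sound (hAdjg x).reachable.symm]⟩
      invFun := fun A => G.connectedComponentMk '' A.1
      left_inv := by
        intro S
        ext c
        constructor
        · rintro ⟨v, hv, rfl⟩
          exact hv
        · intro hc
          obtain ⟨v, rfl⟩ := c.exists_rep
          exact ⟨v, hc, rfl⟩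
      right_inv := by
        rintro ⟨A, hA⟩
        ext v
        simp only [Set.mem_setOf_eq, Subtype.coe_mk]
        constructor
        · rintro ⟨w, hw, hvw⟩
          exact hreach hA hw (SimpleGraph.ConnectedComponent.exact hvw)
        · intro hv
          exact Set.mem_image_of_mem _ hv }
  have h1 : (2 : ℕ) ^ (Nat.card G.ConnectedComponent) = Nat.card (Set G.ConnectedComponent) := by
    rw [Nat.card_eq_fintype_card, Nat.card_eq_fintype_card, Fintype.card_set]
  have h2 : Nat.card (Set G.ConnectedComponent)
      = Nat.card {A : Set (Fin n) // ∀ x ∈ A, f x ∈ A ∧ g x ∈ A} := Nat.card_congr e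
  have h3 : Nat.card {A : Set (Fin n) // ∀ x ∈ A, f x ∈ A ∧ g x ∈ A}
      = Nat.card {B : Finset (Fin n) // ∀ x ∈ B, f x ∈ B ∧ g x ∈ B} := by
    refine Nat.card_congr ((Equiv.subtypeEquiv (Fintype.finsetEquivSet (α := Fin n)) ?_).symm)
    intro B
    simp
  have h4 : Nat.card {B : Finset (Fin n) // ∀ x ∈ B, f x ∈ B ∧ g x ∈ B}
      = ((Finset.univ : Finset (Finset (Fin n))).filter
          (fun A => ∀ x ∈ A, f x ∈ A ∧ g x ∈ A)).card := by
    rw [Nat.card_eq_fintype_card, Fintype.card_subtype]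
  rw [h1, h2, h3, h4]
end comp

section rpart
variable {n : ℕ} {g : Equiv.Perm (Fin n)}

lemma image_R (hg : ∀ i, g (g i) = i ∧ g i ≠ i) :
    (univ.filter (fun x : Fin n => x < g x)).image g = univ.filter (fun x : Fin n => g x < x) := by
  ext y
  simp only [mem_image, mem_filter, mem_univ, true_and]
  constructor
  · rintro ⟨x, hx, rfl⟩
    rwa [(hg x).1]
  · intro hy
    exact ⟨g y, by rwa [(hg y).1], (hg y).1⟩

lemma card_R (hg : ∀ i, g (g i) = i ∧ g i ≠ i) :
    2 * (univ.filter (fun x : Fin n => x < g x)).card = n := by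
  have h1 : (univ.filter (fun x : Fin n => ¬ x < g x)) = univ.filter (fun x : Fin n => g x < x) := by
    apply filter_congr
    intro x _
    simp only [not_lt, eq_iff_iff]
    constructor
    · intro h
      exact lt_of_le_of_ne h (hg x).2
    · exact le_of_lt
  have h2 := Finset.card_filter_add_card_filter_not
    (s := (univ : Finset (Fin n))) (p := fun x : Fin n => x < g x)
  rw [h1, ← image_R hg, Finset.card_image_of_injective _ g.injective] at h2
  simpa [two_mul, Finset.card_univ] using h2

lemma sum_closed_sets {M : Type*} [AddCommMonoid M] (hg : ∀ i, g (g i) = i ∧ g i ≠ i)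
    (w : ℕ → M) :
    ∑ A ∈ (univ : Finset (Finset (Fin n))).filter (fun A => ∀ x ∈ A, g x ∈ A), w A.card
      = ∑ B ∈ (univ.filter (fun x : Fin n => x < g x)).powerset, w (2 * B.card) := by
  set R := univ.filter (fun x : Fin n => x < g x) with hR
  refine Finset.sum_nbij' (fun A => A.filter (fun x => x < g x))
    (fun B => B ∪ B.image g) ?_ ?_ ?_ ?_ ?_
  · intro A _
    rw [mem_powerset, hR]
    exact Finset.filter_subset_filter _ (subset_univ A)
  · intro B hB
    rw [mem_powerset] at hB
    simp only [mem_filter, mem_univ, true_and]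
    intro x hx
    rcases Finset.mem_union.mp hx with h | h
    · exact Finset.mem_union_right _ (Finset.mem_image_of_mem g h)
    · obtain ⟨b, hb, rfl⟩ := Finset.mem_image.mp h
      rw [(hg b).1]
      exact Finset.mem_union_left _ hb
  · -- left inverse : (A.filter) ∪ (A.filter).image g = A for closed A
    intro A hA
    rw [mem_filter] at hA
    apply Finset.Subset.antisymm
    · apply Finset.union_subset
      · exact Finset.filter_subset _ _
      · intro y hy
        obtain ⟨x, hx, rfl⟩ := Finset.mem_image.mp hy
        exact hA.2 x (Finset.mem_of_mem_filter x hx)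
    · intro x hx
      rcases lt_trichotomy x (g x) with h | h | h
      · exact Finset.mem_union_left _ (Finset.mem_filter.mpr ⟨hx, h⟩)
      · exact absurd h.symm (hg x).2
      · refine Finset.mem_union_right _ (Finset.mem_image.mpr ⟨g x, ?_, (hg x).1⟩)
        refine Finset.mem_filter.mpr ⟨hA.2 x hx, ?_⟩
        rw [(hg x).1]
        exact h
  · -- right inverse : (B ∪ image g B).filter (x < g x) = B for B ⊆ R
    intro B hB
    rw [mem_powerset] at hB
    ext x
    simp only [mem_filter, Finset.mem_union, mem_image]
    constructor
    · rintro ⟨h | ⟨b, hb, rfl⟩, hlt⟩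
      · exact h
      · have hbR := hB hb
        rw [hR, mem_filter] at hbR
        rw [(hg b).1] at hlt
        exact absurd (lt_trans hbR.2 hlt) (lt_irrefl b)
    · intro hx
      have hxR := hB hx
      rw [hR, mem_filter] at hxR
      exact ⟨Or.inl hx, hxR.2⟩
  · -- values
    intro A hA
    rw [mem_filter] at hA
    congr 1
    -- card A = 2 * card (A.filter (x < g x)) : A = filter ∪ image g filter, disjoint
    have hclosed := hA.2
    have hunion : A = A.filter (fun x => x < g x) ∪ (A.filter (fun x => x < g x)).image g := by
      apply Finset.Subset.antisymm
      · intro x hx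
        rcases lt_trichotomy x (g x) with h | h | h
        · exact Finset.mem_union_left _ (Finset.mem_filter.mpr ⟨hx, h⟩)
        · exact absurd h.symm (hg x).2
        · refine Finset.mem_union_right _ (Finset.mem_image.mpr ⟨g x, ?_, (hg x).1⟩)
          refine Finset.mem_filter.mpr ⟨hclosed x hx, ?_⟩
          rw [(hg x).1]
          exact h
      · apply Finset.union_subset
        · exact Finset.filter_subset _ _
        · intro y hy
          obtain ⟨x, hx, rfl⟩ := Finset.mem_image.mp hy
          exact hclosed x (Finset.mem_of_mem_filter x hx)
    have hdisj : Disjoint (A.filter (fun x => x < g x))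
        ((A.filter (fun x => x < g x)).image g) := by
      rw [Finset.disjoint_left]
      intro x hx hx'
      obtain ⟨b, hb, rfl⟩ := Finset.mem_image.mp hx'
      have h1 := (Finset.mem_filter.mp hx).2
      have h2 := (Finset.mem_filter.mp hb).2
      rw [(hg b).1] at h1
      exact absurd (lt_trans h2 h1) (lt_irrefl b)
    conv_lhs => rw [hunion]
    rw [Finset.card_union_of_disjoint hdisj, Finset.card_image_of_injective _ g.injective]
    ring
end rpart

theorem total_sum {n m : ℕ} (hnm : n = 2 * m) (g : Equiv.Perm (Fin n))
    (hg : ∀ i, g (g i) = i ∧ g i ≠ i) :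
    ∑ f ∈ pmF (Fin n),
        2 ^ (Nat.card (SimpleGraph.fromRel
          (fun x y : Fin n => f x = y ∨ g x = y)).ConnectedComponent)
      = 2 ^ m * m.factorial := by
  classical
  have h1 : ∑ f ∈ pmF (Fin n),
      2 ^ (Nat.card (SimpleGraph.fromRel
        (fun x y : Fin n => f x = y ∨ g x = y)).ConnectedComponent)
      = ∑ f ∈ pmF (Fin n), ((Finset.univ : Finset (Finset (Fin n))).filter
          (fun A => ∀ x ∈ A, f x ∈ A ∧ g x ∈ A)).card := by
    apply Finset.sum_congr rfl
    intro f hf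
    exact two_pow_components f g (mem_pmF.mp hf) hg
  rw [h1]
  -- interchange
  have h2 : ∑ f ∈ pmF (Fin n), ((Finset.univ : Finset (Finset (Fin n))).filter
          (fun A => ∀ x ∈ A, f x ∈ A ∧ g x ∈ A)).card
      = ∑ A ∈ (univ : Finset (Finset (Fin n))).filter (fun A => ∀ x ∈ A, g x ∈ A),
          ((pmF (Fin n)).filter (fun f => ∀ x ∈ A, f x ∈ A)).card := by
    simp only [Finset.card_filter]
    rw [Finset.sum_comm]
    rw [Finset.sum_filter]
    apply Finset.sum_congr rfl
    intro A _
    by_cases hQ : ∀ x ∈ A, g x ∈ A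
    · rw [if_pos hQ]
      apply Finset.sum_congr rfl
      intro f _
      congr 1
      simp only [eq_iff_iff]
      constructor
      · intro h
        exact fun x hx => (h x hx).1
      · intro h x hx
        exact ⟨h x hx, hQ x hx⟩
    · rw [if_neg hQ]
      apply Finset.sum_eq_zero
      intro f _
      rw [if_neg]
      intro h
      exact hQ (fun x hx => (h x hx).2)
  rw [h2]
  -- split per A
  have h3 : ∀ A ∈ (univ : Finset (Finset (Fin n))).filter (fun A => ∀ x ∈ A, g x ∈ A),
      ((pmF (Fin n)).filter (fun f => ∀ x ∈ A, f x ∈ A)).card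
        = pcard A.card * pcard (n - A.card) := by
    intro A _
    have := card_pm_split (α := Fin n) (fun x => x ∈ A)
    rw [Finset.filter_congr_decidable] at this
    rw [this]
    have hc : ∀ (i : Fintype {x : Fin n // x ∈ A}), @Fintype.card _ i = A.card := by
      intro i
      exact @Fintype.card_coe _ A i
    have hc2 : ∀ (i : Fintype {x : Fin n // ¬ x ∈ A}), @Fintype.card _ i = n - A.card := by
      intro i
      rw [@Fintype.card_congr' _ _ i (Subtype.fintype _) rfl, Fintype.card_subtype_compl,
        Fintype.card_fin, hc]
    rw [hc, hc2]
  rw [Finset.sum_congr rfl h3]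
  -- to powerset of R
  rw [sum_closed_sets hg (fun k => pcard k * pcard (n - k))]
  have hRcard : (univ.filter (fun x : Fin n => x < g x)).card = m := by
    have := card_R hg
    omega
  rw [Finset.sum_powerset]
  rw [hRcard]
  have h4 : ∀ j ∈ range (m+1),
      ∑ B ∈ Finset.powersetCard j (univ.filter (fun x : Fin n => x < g x)),
        (pcard (2 * B.card) * pcard (n - 2 * B.card))
      = (m.choose j) * (dfac j * dfac (m - j)) := by
    intro j hj
    rw [mem_range] at hj
    have hconst : ∀ B ∈ Finset.powersetCard j (univ.filter (fun x : Fin n => x < g x)),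
        pcard (2 * B.card) * pcard (n - 2 * B.card) = dfac j * dfac (m - j) := by
      intro B hB
      have hBcard := (Finset.mem_powersetCard.mp hB).2
      rw [hBcard]
      have e : n - 2 * j = 2 * (m - j) := by omega
      rw [e, pcard_even, pcard_even]
    rw [Finset.sum_congr rfl hconst, Finset.sum_const, Finset.card_powersetCard, hRcard,
      smul_eq_mul]
  rw [Finset.sum_congr rfl h4]
  exact dfac_identity m

lemma two_rpow_bound (t : ℝ) (ht : 0 ≤ t) : 2*t^2 + 1 ≤ (2:ℝ) ^ (3*t) := by
  have hL : (0.6931 : ℝ) ≤ Real.log 2 := by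
    have := Real.log_two_gt_d9
    norm_num at this ⊢
    linarith
  have hL1 : Real.log 2 ≤ 1 := by
    have := Real.log_two_lt_d9
    norm_num at this ⊢
    linarith
  have ha : 0 ≤ Real.log 2 * t := mul_nonneg (by linarith) ht
  have h2 : (2:ℝ) ^ (3*t) = Real.exp (Real.log 2 * (3*t)) := by
    rw [Real.rpow_def_of_pos (by norm_num)]
  have h3 : Real.log 2 * (3*t) = 3 * (Real.log 2 * t) := by ring
  have h4 : Real.exp (3 * (Real.log 2 * t)) = (Real.exp (Real.log 2 * t))^(3:ℕ) := by
    rw [← Real.exp_nat_mul]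
    norm_num
  have h5 : (1 + Real.log 2 * t)^(3:ℕ) ≤ (Real.exp (Real.log 2 * t))^(3:ℕ) := by
    apply pow_le_pow_left₀ (by linarith)
    linarith [Real.add_one_le_exp (Real.log 2 * t)]
  rw [h2, h3, h4]
  refine le_trans ?_ h5
  set L := Real.log 2
  have hL0 : (0:ℝ) ≤ L := by linarith
  have hL2 : (0.4803 : ℝ) ≤ L*L := by nlinarith
  have hLA : 0 ≤ L * (t * (L*t - 0.6)^2) :=
    mul_nonneg hL0 (mul_nonneg ht (sq_nonneg _))
  have hQ : 0 ≤ (L*L - 0.4803) * (t*t) := mul_nonneg (by linarith) (mul_nonneg ht ht)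
  nlinarith [hLA, hQ, ha, ht, hL0]

/-- Let `n` be an even positive integer, let `M` be a uniformly random perfect matching of `K_n`,
and let `M'` be a fixed perfect matching of `K_n`. Then the probability that the union graph
`M ∪ M'` has more than `2√n` connected components is at most `2^{−√n/2}` (stated as a counting
bound; the union graph is the graph on `[n]` whose adjacency is generated by `f x = y ∨ g x = y`). -/
theorem matching_union_components :
    ∀ n : ℕ, 0 < n → Even n → ∀ g : Equiv.Perm (Fin n), g ∈ perfectMatchings n →
      (Set.ncard {f ∈ perfectMatchings n |
          2 * Real.sqrt n <
            (Nat.card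
              (SimpleGraph.fromRel (fun x y : Fin n => f x = y ∨ g x = y)).ConnectedComponent :
              ℝ)} : ℝ) ≤
        (2 : ℝ) ^ (-(Real.sqrt n) / 2) * (Set.ncard (perfectMatchings n) : ℝ) := by
  intro n hn hEven g hg
  classical
  obtain ⟨m, hm⟩ : ∃ m, n = 2 * m := by
    obtain ⟨k, hk⟩ := hEven
    exact ⟨k, by omega⟩
  have hgpm : ∀ i, g (g i) = i ∧ g i ≠ i := hg
  have hpmset : perfectMatchings n = ↑(pmF (Fin n)) := by
    ext f
    simp [perfectMatchings, pmF]
  set S : Finset (Equiv.Perm (Fin n)) :=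
    (pmF (Fin n)).filter (fun f => 2 * Real.sqrt n <
      ((Nat.card (SimpleGraph.fromRel
        (fun x y : Fin n => f x = y ∨ g x = y)).ConnectedComponent : ℕ) : ℝ)) with hS
  have hSet : {f ∈ perfectMatchings n |
      2 * Real.sqrt n <
        (Nat.card (SimpleGraph.fromRel
          (fun x y : Fin n => f x = y ∨ g x = y)).ConnectedComponent : ℝ)} = ↑S := by
    ext f
    simp only [Set.mem_setOf_eq, hS, Finset.coe_filter, hpmset, Finset.mem_coe]
  rw [hSet, hpmset, Set.ncard_coe_finset, Set.ncard_coe_finset]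
  set t := Real.sqrt n with hts
  have ht0 : 0 ≤ t := Real.sqrt_nonneg _
  have hP : (pmF (Fin n)).card = dfac m := by
    rw [pmF_card_eq_pcard, Fintype.card_fin, hm, pcard_even]
  have hT : ∑ f ∈ pmF (Fin n), ((2:ℝ) ^ (Nat.card (SimpleGraph.fromRel
        (fun x y : Fin n => f x = y ∨ g x = y)).ConnectedComponent))
      = ((2^m * m.factorial : ℕ) : ℝ) := by
    rw [← total_sum hm g hgpm]
    push_cast
    rfl
  -- Markov
  have markov : (S.card : ℝ) * (2:ℝ) ^ ((2:ℝ)*t) ≤ ((2^m * m.factorial : ℕ) : ℝ) := by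
    have hb : ∀ f ∈ S, (2:ℝ) ^ ((2:ℝ)*t) ≤ (2:ℝ) ^ (Nat.card (SimpleGraph.fromRel
        (fun x y : Fin n => f x = y ∨ g x = y)).ConnectedComponent) := by
      intro f hf
      rw [hS, Finset.mem_filter] at hf
      have hlt := hf.2
      rw [← Real.rpow_natCast 2 (Nat.card (SimpleGraph.fromRel
        (fun x y : Fin n => f x = y ∨ g x = y)).ConnectedComponent)]
      apply Real.rpow_le_rpow_left_iff (x := 2) one_lt_two |>.mpr
      exact le_of_lt (by exact_mod_cast hlt)
    have h := Finset.card_nsmul_le_sum S _ _ hb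
    rw [nsmul_eq_mul] at h
    refine h.trans (le_trans ?_ hT.le)
    apply Finset.sum_le_sum_of_subset_of_nonneg (Finset.filter_subset _ _)
    intro f _ _
    positivity
  -- T ≤ sqrt(4m+1) * dfac m
  have chain2 : ((2^m * m.factorial : ℕ) : ℝ) ≤ Real.sqrt (4*(m:ℝ)+1) * (dfac m : ℝ) := by
    have h1 : ((2^m * m.factorial : ℕ) : ℝ)^2 ≤ (4*(m:ℝ)+1) * ((dfac m : ℕ) : ℝ)^2 := by
      have := pm_sq_bound m
      have h' : (((2^m * m.factorial)^2 : ℕ) : ℝ) ≤ (((4*m+1) * (dfac m)^2 : ℕ) : ℝ) := by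
        exact_mod_cast this
      push_cast at h'
      convert h' using 2 <;> push_cast <;> ring
    calc ((2^m * m.factorial : ℕ) : ℝ)
        = Real.sqrt (((2^m * m.factorial : ℕ) : ℝ)^2) :=
          (Real.sqrt_sq (by positivity)).symm
      _ ≤ Real.sqrt ((4*(m:ℝ)+1) * ((dfac m : ℕ) : ℝ)^2) := Real.sqrt_le_sqrt h1
      _ = Real.sqrt (4*(m:ℝ)+1) * (dfac m : ℝ) := by
          rw [Real.sqrt_mul (by positivity), Real.sqrt_sq (by positivity)]
  -- sqrt(4m+1) ≤ 2^(3t/2)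
  have chain3 : Real.sqrt (4*(m:ℝ)+1) ≤ (2:ℝ) ^ (3*t/2) := by
    have h1 : (4*(m:ℝ)+1) = 2*(n:ℝ)+1 := by
      rw [hm]; push_cast; ring
    have hn' : (n:ℝ) = t^2 := by
      rw [hts, Real.sq_sqrt (Nat.cast_nonneg n)]
    have h2 : 2*(n:ℝ)+1 ≤ (2:ℝ)^(3*t) := by
      rw [hn']
      exact two_rpow_bound t ht0
    have h3 : (2:ℝ)^(3*t) = ((2:ℝ)^(3*t/2))^2 := by
      rw [← Real.rpow_natCast ((2:ℝ)^(3*t/2)) 2, ← Real.rpow_mul (by norm_num)]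
      norm_num
    calc Real.sqrt (4*(m:ℝ)+1)
        ≤ Real.sqrt (((2:ℝ)^(3*t/2))^2) := Real.sqrt_le_sqrt (by rw [h1, ← h3]; exact h2)
      _ = (2:ℝ)^(3*t/2) := Real.sqrt_sq (by positivity)
  -- assemble
  rw [hP]
  have h2t : (0:ℝ) < (2:ℝ) ^ ((2:ℝ)*t) := Real.rpow_pos_of_pos (by norm_num) _
  rw [← mul_le_mul_iff_of_pos_right h2t]
  have hrhs : (2:ℝ) ^ (-t/2) * (dfac m : ℝ) * (2:ℝ) ^ ((2:ℝ)*t)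
      = (2:ℝ)^(3*t/2) * (dfac m : ℝ) := by
    rw [mul_right_comm, ← Real.rpow_add (by norm_num)]
    ring_nf
  rw [hrhs]
  calc (S.card : ℝ) * (2:ℝ) ^ ((2:ℝ)*t)
      ≤ ((2^m * m.factorial : ℕ) : ℝ) := markov
    _ ≤ Real.sqrt (4*(m:ℝ)+1) * (dfac m : ℝ) := chain2
    _ ≤ (2:ℝ)^(3*t/2) * (dfac m : ℝ) :=
        mul_le_mul_of_nonneg_right chain3 (Nat.cast_nonneg _)
end
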